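/- arXiv:0704.1397 — 9 statements merged into one kernel-verified Lean document; each statement's English description precedes it below -/
import Mathlib

section
/- Let p be an odd prime, d an odd positive integer, and f : ℤ_p → K a continuous function. Then the sequence N ↦ Σ_{a=0}^{dp^N − 1} (−1)^a f(a) converges in K as N → ∞; that is, the fermionic p-adic integral I₋₁(f) = ∫_X f dμ₋₁ exists for every continuous f. -/
/-!
Write `S N` for the `N`-th sum. The range of `S (N + 1)` splits into `p` blocks of the odd length
`d p^N`; as `p` is odd the block signs `(-1)^j` add up to `1`, so `S (N + 1) - S N` is a signed sum
of the differences `f (r + j d p^N) - f r`. These are uniformly small by uniform continuity of `f` on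
the compact space `ℤ_[p]`, and by the ultrametric inequality so is the signed sum. In a complete
ultrametric space a sequence whose consecutive differences tend to `0` converges.
-/

open Filter Finset

theorem Finset.sum_range_mul_eq_sum_sum {M : Type*} [AddCommMonoid M] (g : ℕ → M) (q m : ℕ) :
    ∑ a ∈ range (q * m), g a = ∑ j ∈ range q, ∑ r ∈ range m, g (j * m + r) := by
  induction q with
  | zero => simp
  | succ q ih => rw [Nat.succ_mul, sum_range_add, ih, sum_range_succ]

section AlternatingSum

variable {R : Type*}

/-- The `N`-th Riemann sum of the fermionic integral is `alternatingPartialSum f (d * p ^ N)`. -/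
def alternatingPartialSum [Ring R] (f : ℕ → R) (n : ℕ) : R :=
  ∑ a ∈ range n, (-1) ^ a * f a

theorem alternatingPartialSum_mul_sub [Ring R] (f : ℕ → R) {q m : ℕ} (hq : Odd q) (hm : Odd m) :
    alternatingPartialSum f (q * m) - alternatingPartialSum f m =
      ∑ j ∈ range q, (-1) ^ j * ∑ r ∈ range m, (-1) ^ r * (f (j * m + r) - f r) := by
  have block_signs : ∑ j ∈ range q, (-1 : R) ^ j = 1 := by
    rw [neg_one_geom_sum, if_neg (Nat.not_even_iff_odd.mpr hq)]
  conv_lhs => rw [← one_mul (alternatingPartialSum f m), ← block_signs]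
  rw [alternatingPartialSum, alternatingPartialSum, sum_range_mul_eq_sum_sum, sum_mul,
    ← sum_sub_distrib]
  refine sum_congr rfl fun j _ => ?_
  rw [mul_sum, mul_sum, ← sum_sub_distrib]
  refine sum_congr rfl fun r _ => ?_
  rw [pow_add, pow_mul', hm.neg_one_pow, mul_sub, mul_assoc, mul_sub]

theorem norm_neg_one_pow_mul [SeminormedRing R] (n : ℕ) (x : R) : ‖(-1) ^ n * x‖ = ‖x‖ := by
  rcases neg_one_pow_eq_or R n with h | h <;> simp [h]

theorem norm_alternatingPartialSum_mul_sub_le [NormedRing R] [IsUltrametricDist R]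
    (f : ℕ → R) {q m : ℕ} (hq : Odd q) (hm : Odd m) {ε : ℝ} (hε : 0 ≤ ε)
    (hf : ∀ j < q, ∀ r < m, ‖f (j * m + r) - f r‖ ≤ ε) :
    ‖alternatingPartialSum f (q * m) - alternatingPartialSum f m‖ ≤ ε := by
  rw [alternatingPartialSum_mul_sub f hq hm]
  refine IsUltrametricDist.norm_sum_le_of_forall_le_of_nonneg hε fun j hj => ?_
  rw [norm_neg_one_pow_mul]
  refine IsUltrametricDist.norm_sum_le_of_forall_le_of_nonneg hε fun r hr => ?_
  rw [norm_neg_one_pow_mul]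
  exact hf j (mem_range.mp hj) r (mem_range.mp hr)

end AlternatingSum

theorem PadicInt.eventually_dist_add_p_pow_mul_lt {p : ℕ} [Fact p.Prime] {E : Type*}
    [PseudoMetricSpace E] {f : ℤ_[p] → E} (hf : Continuous f) {ε : ℝ} (hε : 0 < ε) :
    ∀ᶠ N in atTop, ∀ x y : ℤ_[p], dist (f (x + p ^ N * y)) (f x) < ε := by
  obtain ⟨δ, hδ, hfδ⟩ :=
    Metric.uniformContinuous_iff.mp (CompactSpace.uniformContinuous_of_continuous hf) ε hε
  have hp_pow : Tendsto (fun N : ℕ => (p : ℤ_[p]) ^ N) atTop (nhds 0) :=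
    tendsto_pow_atTop_nhds_zero_of_norm_lt_one ((PadicInt.norm_lt_one_iff_dvd _).mpr dvd_rfl)
  filter_upwards [(NormedAddGroup.tendsto_nhds_zero.mp hp_pow) δ hδ] with N hN x y
  refine hfδ ?_
  rw [dist_eq_norm, add_sub_cancel_left]
  calc ‖(p : ℤ_[p]) ^ N * y‖ ≤ ‖(p : ℤ_[p]) ^ N‖ := by
        rw [norm_mul]; exact mul_le_of_le_one_right (norm_nonneg _) (PadicInt.norm_le_one y)
    _ < δ := hN

theorem fermionic_integral_exists_general
    {p : ℕ} [Fact p.Prime] (hp : Odd p)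
    {K : Type*} [NontriviallyNormedField K] [CompleteSpace K] [IsUltrametricDist K]
    {d : ℕ} (hd : Odd d)
    (f : ℤ_[p] → K) (hf : Continuous f) :
    ∃ L : K,
      Tendsto (fun N : ℕ => ∑ a ∈ Finset.range (d * p ^ N), (-1 : K) ^ a * f (a : ℤ_[p]))
        atTop (nhds L) := by
  set S : ℕ → K := fun N => alternatingPartialSum (fun a => f a) (d * p ^ N)
  suffices Tendsto (fun N => S (N + 1) - S N) atTop (nhds 0) from
    cauchySeq_tendsto_of_complete (NonarchimedeanAddGroup.cauchySeq_of_tendsto_sub_nhds_zero this)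
  refine Metric.nhds_basis_closedBall.tendsto_right_iff.mpr fun ε hε => ?_
  filter_upwards [PadicInt.eventually_dist_add_p_pow_mul_lt hf hε] with N hN
  rw [mem_closedBall_zero_iff]
  have hS : S (N + 1) = alternatingPartialSum (fun a => f a) (p * (d * p ^ N)) := by
    simp only [S]; rw [pow_succ, ← mul_assoc, mul_comm _ p]
  rw [hS]
  refine norm_alternatingPartialSum_mul_sub_le _ hp (hd.mul hp.pow) hε.le fun j _ r _ => ?_
  have hcast : ((j * (d * p ^ N) + r : ℕ) : ℤ_[p]) = r + p ^ N * (j * d : ℕ) := by push_cast; ring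
  rw [hcast, ← dist_eq_norm]
  exact (hN _ _).le

/-- For an odd prime `p`, an odd positive integer `d`, and a continuous
function `f : ℤ_p → K` (with `K` a complete nonarchimedean normed field that is a
`ℚ_p`-algebra with isometric structure map), the sequence
`N ↦ ∑_{a=0}^{d p^N − 1} (−1)^a f(a)` converges in `K`; i.e. the fermionic `p`-adic
integral `I₋₁(f)` exists for every continuous `f`. -/
theorem fermionic_integral_exists
    {p : ℕ} [Fact p.Prime] (hp : Odd p)
    {K : Type*} [NontriviallyNormedField K] [CompleteSpace K] [IsUltrametricDist K]
    [Algebra ℚ_[p] K] (halg : ∀ x : ℚ_[p], ‖algebraMap ℚ_[p] K x‖ = ‖x‖)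
    {d : ℕ} (hd : Odd d) (hdpos : 0 < d)
    (f : ℤ_[p] → K) (hf : Continuous f) :
    ∃ L : K,
      Tendsto (fun N : ℕ => ∑ a ∈ Finset.range (d * p ^ N), (-1 : K) ^ a * f (a : ℤ_[p]))
        atTop (nhds L) :=
  fermionic_integral_exists_general hp hd f hf
end

section
/- Let p be an odd prime, d an odd positive integer, χ a Dirichlet character modulo d with values in K, and w ∈ K with w^{p^m} = 1 for some integer m ≥ 0. Then for every integer n ≥ 0 the generalized twisted Euler number E_{n,w,χ} := lim_{N→∞} Σ_{a=0}^{dp^N−1} (−1)^a χ(a) w^a a^n exists in K (Witt's formula E_{n,w,χ} = ∫_X χ(t) t^n w^t dμ₋₁(t)), and these numbers satisfy, for every n ≥ 0, w^d · Σ_{j=0}^{n} C(n,j) d^{n−j} E_{j,w,χ} + E_{n,w,χ} = 2 Σ_{i=0}^{d−1} (−1)^i χ(i) w^i i^n (the coefficient form of the generating-function identity Σ_{n≥0} E_{n,w,χ} z^n/n! = 2 Σ_{i} (−1)^i χ(i) w^i e^{iz}/(w^d e^{dz} + 1)). -/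
open Filter Topology Finset

/-!
Write `g_n(a) = (-1)^a χ(a) w^a a^n`. Since `d` is odd and `χ` has period `d`, the binomial
theorem gives `g_n(d + a) = -w^d ∑_{j ≤ n} C(n,j) d^{n-j} g_j(a)`, so shifting the partial sum
`f_n(M) = ∑_{a < M} g_n(a)` by `d` yields the exact identity
`w^d ∑_{j ≤ n} C(n,j) d^{n-j} f_j(M) + f_n(M) = ∑_{i < d} g_n(i) - ∑_{i < d} g_n(M + i)`.
For `M = d p^N` the boundary terms tend to `-g_n(i)`: the sign flips because `d p^N` is odd,
`w^{d p^N} = 1` once `N ≥ m`, and `d p^N + i → i` because `‖p‖ < 1`. The identity is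
triangular with diagonal coefficient `w^d + 1`, which is nonzero because `w` has odd order;
solving it by strong induction on `n` gives convergence of every `f_n`, and passing to the limit
gives the recurrence.
-/

theorem exists_tendsto_of_triangular_recurrence {K ι : Type*} [Field K] [TopologicalSpace K]
    [IsTopologicalRing K] [T2Space K] {l : Filter ι} [l.NeBot] {c : K} (hc : c + 1 ≠ 0)
    {b : ℕ → ℕ → K} (hb : ∀ n, b n n = 1) {f R : ℕ → ι → K} {r : ℕ → K}
    (hR : ∀ n, Tendsto (R n) l (𝓝 (r n)))
    (hfR : ∀ n x, c * ∑ j ∈ range (n + 1), b n j * f j x + f n x = R n x) :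
    ∃ E : ℕ → K, (∀ n, Tendsto (f n) l (𝓝 (E n))) ∧
      ∀ n, c * ∑ j ∈ range (n + 1), b n j * E j + E n = r n := by
  have hconv : ∀ n, Tendsto (f n) l (𝓝 (limUnder l (f n))) := by
    intro n
    induction n using Nat.strong_induction_on with
    | _ n ih =>
      have hsolve : f n = fun x => (c + 1)⁻¹ * (R n x - c * ∑ j ∈ range n, b n j * f j x) := by
        funext x
        rw [eq_inv_mul_iff_mul_eq₀ hc]
        have := hfR n x
        rw [sum_range_succ, hb] at this
        linear_combination this
      refine tendsto_nhds_limUnder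
        ⟨(c + 1)⁻¹ * (r n - c * ∑ j ∈ range n, b n j * limUnder l (f j)), ?_⟩
      rw [hsolve]
      refine ((hR n).sub (tendsto_const_nhds.mul (tendsto_finsetSum _ fun j hj => ?_))).const_mul _
      exact tendsto_const_nhds.mul (ih j (mem_range.mp hj))
  refine ⟨fun n => limUnder l (f n), hconv, fun n => tendsto_nhds_unique ?_ (hR n)⟩
  refine Tendsto.congr (hfR n) ((tendsto_const_nhds.mul (tendsto_finsetSum _ fun j _ => ?_)).add
    (hconv n))
  exact tendsto_const_nhds.mul (hconv j)

theorem pow_add_one_ne_zero_of_pow_eq_one {R : Type*} [CommRing R] (h2 : (2 : R) ≠ 0)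
    {w : R} {k : ℕ} (hk : Odd k) (hw : w ^ k = 1) (d : ℕ) : w ^ d + 1 ≠ 0 := by
  intro h
  have hneg : w ^ d = -1 := eq_neg_of_add_eq_zero_left h
  have : (-1 : R) = 1 := by
    rw [← hk.neg_one_pow, ← hneg, ← pow_mul, mul_comm, pow_mul, hw, one_pow]
  exact h2 (by linear_combination -this)

theorem sum_range_add_left_eq {M : Type*} [AddCommGroup M] (g : ℕ → M) (d n : ℕ) :
    ∑ a ∈ range n, g (d + a)
      = ∑ a ∈ range n, g a + ∑ i ∈ range d, g (n + i) - ∑ i ∈ range d, g i := by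
  have h₁ := sum_range_add g d n
  have h₂ := sum_range_add g n d
  rw [add_comm d n] at h₁
  linear_combination (norm := abel) h₂ - h₁

section TwistedSums

variable {K : Type*} {χ : ℤ → K} {d : ℕ}

def twistedTerm [Ring K] (χ : ℤ → K) (w : K) (n a : ℕ) : K :=
  (-1) ^ a * χ a * w ^ a * (a : K) ^ n

theorem twistedTerm_add_left [CommRing K] (hχ : Function.Periodic χ d) (hd : Odd d)
    (w : K) (n a : ℕ) :
    twistedTerm χ w n (d + a)
      = -(w ^ d * ∑ j ∈ range (n + 1),
          (n.choose j : K) * (d : K) ^ (n - j) * twistedTerm χ w j a) := by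
  have hχa : χ ((d + a : ℕ) : ℤ) = χ a := by
    rw [Nat.cast_add, add_comm]; exact hχ a
  rw [twistedTerm, hχa, Nat.cast_add, add_comm (d : K), add_pow, pow_add, pow_add,
    hd.neg_one_pow, mul_sum, mul_sum, ← sum_neg_distrib]
  refine sum_congr rfl fun j _ => ?_
  rw [twistedTerm]
  ring

theorem twistedSum_recurrence [CommRing K] (hχ : Function.Periodic χ d) (hd : Odd d)
    (w : K) (n M : ℕ) :
    w ^ d * ∑ j ∈ range (n + 1),
        (n.choose j : K) * (d : K) ^ (n - j) * ∑ a ∈ range M, twistedTerm χ w j a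
      + ∑ a ∈ range M, twistedTerm χ w n a
      = ∑ i ∈ range d, twistedTerm χ w n i - ∑ i ∈ range d, twistedTerm χ w n (M + i) := by
  have hshift := sum_range_add_left_eq (twistedTerm χ w n) d M
  simp only [twistedTerm_add_left hχ hd, sum_neg_distrib, ← mul_sum] at hshift
  rw [sum_comm] at hshift
  simp only [← mul_sum] at hshift
  linear_combination -hshift

theorem tendsto_twistedTerm_add [NormedField K] (hχ : Function.Periodic χ d) (hd : Odd d)
    {p m : ℕ} (hp : Odd p) (hp1 : ‖(p : K)‖ < 1) {w : K} (hw : w ^ p ^ m = 1) (n i : ℕ) :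
    Tendsto (fun N => twistedTerm χ w n (d * p ^ N + i)) atTop
      (𝓝 (-twistedTerm χ w n i)) := by
  have hcast : Tendsto (fun N : ℕ => ((d * p ^ N + i : ℕ) : K)) atTop (𝓝 i) := by
    have := (tendsto_pow_atTop_nhds_zero_of_norm_lt_one hp1).const_mul (d : K)
    simpa using this.add_const (i : K)
  have hlim := (hcast.pow n).const_mul (-((-1 : K) ^ i * χ i * w ^ i))
  rw [show -((-1 : K) ^ i * χ i * w ^ i) * (i : K) ^ n = -twistedTerm χ w n i by
    rw [twistedTerm]; ring] at hlim
  refine hlim.congr' ?_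
  filter_upwards [eventually_ge_atTop m] with N hN
  have hsign : (-1 : K) ^ (d * p ^ N + i) = -(-1) ^ i := by
    rw [pow_add, (hd.mul hp.pow).neg_one_pow, neg_one_mul]
  have hχN : χ ((d * p ^ N + i : ℕ) : ℤ) = χ i := by
    simpa [add_comm, mul_comm] using hχ.nat_mul (p ^ N) i
  have hwN : w ^ (d * p ^ N + i) = w ^ i := by
    obtain ⟨k, hk⟩ := (pow_dvd_pow p hN).mul_left d
    rw [pow_add, hk, pow_mul, hw, one_pow, one_mul]
  rw [twistedTerm, hsign, hχN, hwN]
  ring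

end TwistedSums

theorem generalized_twisted_euler_numbers_exist_and_recurrence_general
    {p : ℕ} [Fact p.Prime] (hp : Odd p)
    {K : Type*} [NontriviallyNormedField K]
    [Algebra ℚ_[p] K] (halg : ∀ x : ℚ_[p], ‖algebraMap ℚ_[p] K x‖ = ‖x‖)
    {d : ℕ} (hd : Odd d)
    (χ : ℤ → K) (hχper : ∀ a : ℤ, χ (a + d) = χ a)
    (w : K) (m : ℕ) (hw : w ^ p ^ m = 1) :
    ∃ E : ℕ → K,
      (∀ n : ℕ, Tendsto (fun N : ℕ => ∑ a ∈ Finset.range (d * p ^ N),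
          (-1 : K) ^ a * χ (a : ℤ) * w ^ a * (a : K) ^ n) atTop (nhds (E n))) ∧
      (∀ n : ℕ, w ^ d * ∑ j ∈ Finset.range (n + 1),
            (n.choose j : K) * (d : K) ^ (n - j) * E j + E n
          = 2 * ∑ i ∈ Finset.range d, (-1 : K) ^ i * χ (i : ℤ) * w ^ i * (i : K) ^ n) := by
  have : CharZero K := charZero_of_injective_algebraMap (algebraMap ℚ_[p] K).injective
  have hp1 : ‖(p : K)‖ < 1 := by
    rw [← map_natCast (algebraMap ℚ_[p] K), halg]
    exact Padic.norm_p_lt_one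
  have hboundary : ∀ n, Tendsto (fun N => ∑ i ∈ range d, twistedTerm χ w n i
      - ∑ i ∈ range d, twistedTerm χ w n (d * p ^ N + i)) atTop
      (𝓝 (2 * ∑ i ∈ range d, twistedTerm χ w n i)) := fun n => by
    rw [two_mul, ← sub_neg_eq_add, ← sum_neg_distrib]
    exact tendsto_const_nhds.sub
      (tendsto_finsetSum _ fun i _ => tendsto_twistedTerm_add hχper hd hp hp1 hw n i)
  exact exists_tendsto_of_triangular_recurrence
    (pow_add_one_ne_zero_of_pow_eq_one two_ne_zero hp.pow hw d) (by simp) hboundary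
    fun n N => twistedSum_recurrence hχper hd w n (d * p ^ N)

/-- For an odd prime `p`, an odd positive integer `d`, a Dirichlet
character `χ` modulo `d` with values in `K`, and `w ∈ K` with `w^{p^m} = 1`, the
generalized twisted Euler numbers `E_{n,w,χ} = lim_N ∑_{a<dp^N} (−1)^a χ(a) w^a a^n`
exist (Witt's formula), and satisfy, for every `n ≥ 0`,
`w^d · ∑_{j≤n} C(n,j) d^{n−j} E_{j,w,χ} + E_{n,w,χ} = 2 ∑_{i<d} (−1)^i χ(i) w^i i^n`. -/
theorem generalized_twisted_euler_numbers_exist_and_recurrence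
    {p : ℕ} [Fact p.Prime] (hp : Odd p)
    {K : Type*} [NontriviallyNormedField K] [CompleteSpace K] [IsUltrametricDist K]
    [Algebra ℚ_[p] K] (halg : ∀ x : ℚ_[p], ‖algebraMap ℚ_[p] K x‖ = ‖x‖)
    {d : ℕ} (hd : Odd d) (hdpos : 0 < d)
    (χ : ℤ → K) (hχper : ∀ a : ℤ, χ (a + d) = χ a)
    (hχmul : ∀ a b : ℤ, χ (a * b) = χ a * χ b) (hχone : χ 1 = 1)
    (hχzero : ∀ a : ℤ, 1 < Int.gcd a d → χ a = 0)
    (w : K) (m : ℕ) (hw : w ^ p ^ m = 1) :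
    ∃ E : ℕ → K,
      (∀ n : ℕ, Tendsto (fun N : ℕ => ∑ a ∈ Finset.range (d * p ^ N),
          (-1 : K) ^ a * χ (a : ℤ) * w ^ a * (a : K) ^ n) atTop (nhds (E n))) ∧
      (∀ n : ℕ, w ^ d * ∑ j ∈ Finset.range (n + 1),
            (n.choose j : K) * (d : K) ^ (n - j) * E j + E n
          = 2 * ∑ i ∈ Finset.range d, (-1 : K) ^ i * χ (i : ℤ) * w ^ i * (i : K) ^ n) :=
  generalized_twisted_euler_numbers_exist_and_recurrence_general hp halg hd χ hχper w m hw
end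

section
/- The series Σ_{k=0}^{∞} (−1)^k w^k q^{hk} [k+x]_q^n converges absolutely; for each 0 ≤ j ≤ n one has 1 + w q^{h+j} ≠ 0; and the closed-form evaluation [2]_q · Σ_{k=0}^{∞} (−1)^k w^k q^{hk} [k+x]_q^n = ([2]_q/(1−q)^n) · Σ_{j=0}^{n} C(n,j) (−1)^j q^{xj} / (1 + w q^{h+j}) holds (i.e. the twisted (h,q)-Euler polynomial E^{(h)}_{n,q,w}(x) equals its finite closed form). -/
/-! Expanding `[k+x]_q^n = (1 - q^(k+x))^n / (1 - q)^n` by the binomial theorem turns the `k`-th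
term of the series into `∑_{j ≤ n} C(n,j) (-1)^j q^(xj) / (1-q)^n · (-w q^(h+j))^k`, a finite
combination of geometric sequences whose ratios have norm `|w| |q|^(h+j) < 1`. Each converges
absolutely, to `(1 + w q^(h+j))⁻¹` up to its coefficient, and summing over `j` gives the closed form. -/

open Finset

section FiniteGeometric

variable {K ι : Type*} [NormedField K] {s : Finset ι} {r : ι → K}

theorem summable_norm_sum_mul_geometric (c : ι → K) (hr : ∀ j ∈ s, ‖r j‖ < 1) :
    Summable fun k : ℕ => ‖∑ j ∈ s, c j * r j ^ k‖ :=
  .of_nonneg_of_le (fun _ => norm_nonneg _) (fun _ => norm_sum_le _ _)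
    (summable_sum fun j hj => by
      simpa only [norm_mul, norm_pow] using
        (summable_geometric_of_lt_one (norm_nonneg _) (hr j hj)).mul_left ‖c j‖)

theorem hasSum_sum_mul_geometric [CompleteSpace K] (c : ι → K) (hr : ∀ j ∈ s, ‖r j‖ < 1) :
    HasSum (fun k : ℕ => ∑ j ∈ s, c j * r j ^ k) (∑ j ∈ s, c j * (1 - r j)⁻¹) :=
  hasSum_sum fun j hj => (hasSum_geometric_of_norm_lt_one (hr j hj)).mul_left (c j)

end FiniteGeometric

theorem norm_mul_pow_lt_one {K : Type*} [NormedField K] {w q : K} (hw : ‖w‖ ≤ 1) (hq : ‖q‖ < 1)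
    {m : ℕ} (hm : 1 ≤ m) : ‖w * q ^ m‖ < 1 := by
  rw [norm_mul, norm_pow]
  calc ‖w‖ * ‖q‖ ^ m ≤ 1 * ‖q‖ ^ 1 :=
        mul_le_mul hw (pow_le_pow_of_le_one (norm_nonneg _) hq.le hm) (by positivity) zero_le_one
    _ < 1 := by simpa using hq

theorem twisted_term_eq_sum_geometric {K : Type*} [Field K] (q w : K) (h n x k : ℕ) :
    (-1 : K) ^ k * w ^ k * q ^ (h * k) * ((1 - q ^ (k + x)) / (1 - q)) ^ n =
      ∑ j ∈ range (n + 1),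
        (n.choose j * (-1 : K) ^ j * q ^ (x * j) / (1 - q) ^ n) * (-(w * q ^ (h + j))) ^ k := by
  rw [div_pow, ← neg_add_eq_sub, add_pow, mul_div_assoc', mul_sum, sum_div]
  refine sum_congr rfl fun j _ => ?_
  ring

theorem twisted_hq_euler_polynomial_closed_form_general
    (q w : ℂ) (hq : ‖q‖ < 1) (hw : ‖w‖ ≤ 1)
    (h : ℕ) (hh : 1 ≤ h) (n x : ℕ) :
    Summable (fun k : ℕ =>
        ‖(-1 : ℂ) ^ k * w ^ k * q ^ (h * k) * ((1 - q ^ (k + x)) / (1 - q)) ^ n‖) ∧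
    (∀ j ∈ Finset.range (n + 1), 1 + w * q ^ (h + j) ≠ 0) ∧
    (1 + q) * ∑' k : ℕ, (-1 : ℂ) ^ k * w ^ k * q ^ (h * k) *
        ((1 - q ^ (k + x)) / (1 - q)) ^ n
      = (1 + q) / (1 - q) ^ n * ∑ j ∈ Finset.range (n + 1),
          (n.choose j : ℂ) * (-1 : ℂ) ^ j * q ^ (x * j) / (1 + w * q ^ (h + j)) := by
  have hratio : ∀ j ∈ range (n + 1), ‖-(w * q ^ (h + j))‖ < 1 := fun j _ => by
    rw [norm_neg]
    exact norm_mul_pow_lt_one hw hq (by omega)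
  simp_rw [twisted_term_eq_sum_geometric q w h n x]
  refine ⟨summable_norm_sum_mul_geometric _ hratio, fun j hj hzero => ?_, ?_⟩
  · have hminus_one : w * q ^ (h + j) = -1 := by linear_combination hzero
    simpa [hminus_one] using hratio j hj
  · rw [(hasSum_sum_mul_geometric _ hratio).tsum_eq, mul_sum, mul_sum]
    refine sum_congr rfl fun j _ => ?_
    rw [sub_neg_eq_add]
    ring

/-- For `q ∈ ℂ` with `0 < |q| < 1`, `|w| ≤ 1`, and integers `h ≥ 1`,
`n ≥ 0`, `x ≥ 0`: the series `∑_k (−1)^k w^k q^{hk} [k+x]_q^n` converges absolutely,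
each denominator `1 + w q^{h+j}` (for `0 ≤ j ≤ n`) is nonzero, and the twisted
`(h,q)`-Euler polynomial `E^{(h)}_{n,q,w}(x)` equals its finite closed form. -/
theorem twisted_hq_euler_polynomial_closed_form
    (q w : ℂ) (hq0 : q ≠ 0) (hq : ‖q‖ < 1) (hw : ‖w‖ ≤ 1)
    (h : ℕ) (hh : 1 ≤ h) (n x : ℕ) :
    Summable (fun k : ℕ =>
        ‖(-1 : ℂ) ^ k * w ^ k * q ^ (h * k) * ((1 - q ^ (k + x)) / (1 - q)) ^ n‖) ∧
    (∀ j ∈ Finset.range (n + 1), 1 + w * q ^ (h + j) ≠ 0) ∧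
    (1 + q) * ∑' k : ℕ, (-1 : ℂ) ^ k * w ^ k * q ^ (h * k) *
        ((1 - q ^ (k + x)) / (1 - q)) ^ n
      = (1 + q) / (1 - q) ^ n * ∑ j ∈ Finset.range (n + 1),
          (n.choose j : ℂ) * (-1 : ℂ) ^ j * q ^ (x * j) / (1 + w * q ^ (h + j)) :=
  twisted_hq_euler_polynomial_closed_form_general q w hq hw h hh n x
end

section
/- Let d be an odd positive integer and x ≥ 0 an integer. Then the distribution relation E^{(h)}_{n,q,w}(x) = ([2]_q/[2]_{q^d}) · ((1−q^d)/(1−q))^n · Σ_{a=0}^{d−1} q^{ha} w^a (−1)^a · [2]_{q^d} Σ_{m=0}^{∞} (−1)^m w^{dm} q^{dhm} ((1−q^{dm+x+a})/(1−q^d))^n holds, where all series converge absolutely; the inner series is the value E^{(h)}_{n,q^d,w^d}((x+a)/d) of the twisted (h,q^d)-Euler polynomial, so E^{(h)}_{n,q,w}(x) = ([2]_q/[2]_{q^d}) [d]_q^n Σ_{a=0}^{d−1} q^{ha} w^a (−1)^a E^{(h)}_{n,q^d,w^d}((x+a)/d). -/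
/-! Split the series according to the residue `a` of `k` modulo `d`, writing `k = a + d m`.
Since `d` is odd, `(-1)^k = (-1)^a (-1)^m`, and `[a + d m + x]_q = [d]_q [m + (x + a)/d]_{q^d}`,
so each residue class is a twisted `(h, q^d)`-Euler series in `w^d`. -/

open Finset

section NormedField

variable {𝕜 : Type*} [NormedField 𝕜]

lemma one_sub_ne_zero_of_norm_lt_one {z : 𝕜} (hz : ‖z‖ < 1) : 1 - z ≠ 0 := by
  rw [sub_ne_zero]
  rintro rfl
  simp at hz

lemma one_add_ne_zero_of_norm_lt_one {z : 𝕜} (hz : ‖z‖ < 1) : 1 + z ≠ 0 := by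
  simpa using one_sub_ne_zero_of_norm_lt_one (z := -z) (by simpa using hz)

lemma norm_one_sub_pow_le_two {q : 𝕜} (hq : ‖q‖ ≤ 1) (y : ℕ) : ‖1 - q ^ y‖ ≤ 2 :=
  calc ‖1 - q ^ y‖ ≤ ‖(1 : 𝕜)‖ + ‖q‖ ^ y := by
        rw [← norm_pow]; exact norm_sub_le _ _
    _ ≤ 1 + 1 := by gcongr <;> simp [pow_le_one₀ (norm_nonneg q) hq]
    _ = 2 := one_add_one_eq_two

lemma norm_div_pow_one_sub_pow_le {q : 𝕜} (hq : ‖q‖ ≤ 1) (s : 𝕜) (n y : ℕ) :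
    ‖((1 - q ^ y) / s) ^ n‖ ≤ (2 / ‖s‖) ^ n := by
  rw [norm_pow, norm_div]
  gcongr
  exact norm_one_sub_pow_le_two hq y

lemma summable_norm_neg_one_pow_mul_pow_mul_pow {q w : 𝕜} (hq : ‖q‖ < 1) (hw : ‖w‖ ≤ 1)
    {h : ℕ} (hh : 1 ≤ h) {g : ℕ → 𝕜} {C : ℝ} (hg : ∀ k, ‖g k‖ ≤ C) :
    Summable fun k => ‖(-1) ^ k * w ^ k * q ^ (h * k) * g k‖ := by
  have hr : ‖w‖ * ‖q‖ ^ h < 1 :=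
    calc ‖w‖ * ‖q‖ ^ h ≤ 1 * ‖q‖ ^ 1 :=
          mul_le_mul hw (pow_le_pow_of_le_one (norm_nonneg q) hq.le hh) (by positivity) zero_le_one
      _ < 1 := by simpa using hq
  refine .of_nonneg_of_le (fun _ => norm_nonneg _) (fun k => ?_)
    ((summable_geometric_of_lt_one (by positivity) hr).mul_left C)
  calc ‖(-1) ^ k * w ^ k * q ^ (h * k) * g k‖ = (‖w‖ * ‖q‖ ^ h) ^ k * ‖g k‖ := by
        simp only [norm_mul, norm_pow, norm_neg, norm_one, one_pow, one_mul, pow_mul, mul_pow]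
    _ ≤ C * (‖w‖ * ‖q‖ ^ h) ^ k := by
        rw [mul_comm]; gcongr; exact hg k

end NormedField

lemma ZMod.sum_comp_val_eq_sum_range {M : Type*} [AddCommMonoid M] (N : ℕ) [NeZero N]
    (g : ℕ → M) : ∑ j : ZMod N, g j.val = ∑ i ∈ range N, g i := by
  refine sum_nbij (·.val) (by simp [ZMod.val_lt]) (fun _ _ _ _ h => ZMod.val_injective N h)
    (fun i hi => ⟨i, by simp, ZMod.val_cast_of_lt (mem_range.mp hi)⟩) (fun _ _ => rfl)

lemma tsum_eq_sum_range_tsum_add_mul {R : Type*} [AddCommGroup R] [UniformSpace R]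
    [IsUniformAddGroup R] [CompleteSpace R] [T0Space R] {f : ℕ → R} (hf : Summable f)
    (N : ℕ) [NeZero N] : ∑' k, f k = ∑ a ∈ range N, ∑' m, f (a + N * m) := by
  rw [Nat.sumByResidueClasses hf N,
    ZMod.sum_comp_val_eq_sum_range N (fun a => ∑' m, f (a + N * m))]

lemma twisted_euler_term_add_mul {K : Type*} [Field K] {q : K} (w : K) {d : ℕ} (hd : Odd d)
    (hqd : 1 - q ^ d ≠ 0) (h n x a m : ℕ) :
    (-1) ^ (a + d * m) * w ^ (a + d * m) * q ^ (h * (a + d * m)) *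
        ((1 - q ^ (a + d * m + x)) / (1 - q)) ^ n
      = q ^ (h * a) * w ^ a * (-1) ^ a * ((1 - q ^ d) / (1 - q)) ^ n *
        ((-1) ^ m * w ^ (d * m) * q ^ (d * h * m) *
          ((1 - q ^ (d * m + x + a)) / (1 - q ^ d)) ^ n) := by
  have hsign : (-1 : K) ^ (a + d * m) = (-1) ^ a * (-1) ^ m := by
    rw [pow_add, pow_mul, hd.neg_one_pow]
  have hbase : (1 - q ^ d) / (1 - q) * ((1 - q ^ (d * m + x + a)) / (1 - q ^ d))
      = (1 - q ^ (a + d * m + x)) / (1 - q) := by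
    rw [div_mul_div_comm, mul_comm (1 - q ^ d), mul_div_mul_right _ _ hqd]
    ring_nf
  rw [hsign, ← hbase, mul_pow, pow_add, mul_add, pow_add, mul_left_comm h d m, mul_comm d h]
  ring

theorem twisted_hq_euler_polynomial_distribution_general
    (q w : ℂ) (hq : ‖q‖ < 1) (hw : ‖w‖ ≤ 1)
    (h : ℕ) (hh : 1 ≤ h) (n : ℕ)
    (d : ℕ) (hd : Odd d) (x : ℕ) :
    Summable (fun k : ℕ =>
        ‖(-1 : ℂ) ^ k * w ^ k * q ^ (h * k) * ((1 - q ^ (k + x)) / (1 - q)) ^ n‖) ∧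
    (∀ a ∈ Finset.range d, Summable (fun m : ℕ =>
        ‖(-1 : ℂ) ^ m * w ^ (d * m) * q ^ (d * h * m) *
          ((1 - q ^ (d * m + x + a)) / (1 - q ^ d)) ^ n‖)) ∧
    (1 + q) * ∑' k : ℕ, (-1 : ℂ) ^ k * w ^ k * q ^ (h * k) *
        ((1 - q ^ (k + x)) / (1 - q)) ^ n
      = (1 + q) / (1 + q ^ d) * ((1 - q ^ d) / (1 - q)) ^ n *
          ∑ a ∈ Finset.range d, q ^ (h * a) * w ^ a * (-1 : ℂ) ^ a *
            ((1 + q ^ d) * ∑' m : ℕ, (-1 : ℂ) ^ m * w ^ (d * m) * q ^ (d * h * m) *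
              ((1 - q ^ (d * m + x + a)) / (1 - q ^ d)) ^ n) := by
  have : NeZero d := ⟨hd.pos.ne'⟩
  have hqd : ‖q ^ d‖ < 1 := by rw [norm_pow]; exact pow_lt_one₀ (norm_nonneg q) hq hd.pos.ne'
  have hwd : ‖w ^ d‖ ≤ 1 := by rw [norm_pow]; exact pow_le_one₀ (norm_nonneg w) hw
  have hsum := summable_norm_neg_one_pow_mul_pow_mul_pow hq hw hh
    (norm_div_pow_one_sub_pow_le hq.le (1 - q) n <| · + x)
  refine ⟨hsum, fun a _ => ?_, ?_⟩
  · simpa only [← pow_mul, mul_assoc] using summable_norm_neg_one_pow_mul_pow_mul_pow hqd hwd hh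
      fun m => norm_div_pow_one_sub_pow_le hq.le (1 - q ^ d) n (d * m + x + a)
  · rw [tsum_eq_sum_range_tsum_add_mul hsum.of_norm d, mul_sum, mul_sum]
    refine sum_congr rfl fun a _ => ?_
    rw [tsum_congr (twisted_euler_term_add_mul w hd (one_sub_ne_zero_of_norm_lt_one hqd) h n x a),
      tsum_mul_left]
    field_simp [one_add_ne_zero_of_norm_lt_one hqd]

/-- distribution relation for twisted `(h,q)`-Euler polynomials. For `q ∈ ℂ`
with `0 < |q| < 1`, `|w| ≤ 1`, `h ≥ 1`, `n ≥ 0`, `d` odd positive and `x ≥ 0`: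
all series converge absolutely and
`E^{(h)}_{n,q,w}(x) = ([2]_q/[2]_{q^d}) [d]_q^n ∑_{a<d} q^{ha} w^a (−1)^a
  E^{(h)}_{n,q^d,w^d}((x+a)/d)`,
where the inner Euler polynomial values are given by their convergent series. -/
theorem twisted_hq_euler_polynomial_distribution
    (q w : ℂ) (hq0 : q ≠ 0) (hq : ‖q‖ < 1) (hw : ‖w‖ ≤ 1)
    (h : ℕ) (hh : 1 ≤ h) (n : ℕ)
    (d : ℕ) (hd : Odd d) (hdpos : 0 < d) (x : ℕ) :
    Summable (fun k : ℕ =>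
        ‖(-1 : ℂ) ^ k * w ^ k * q ^ (h * k) * ((1 - q ^ (k + x)) / (1 - q)) ^ n‖) ∧
    (∀ a ∈ Finset.range d, Summable (fun m : ℕ =>
        ‖(-1 : ℂ) ^ m * w ^ (d * m) * q ^ (d * h * m) *
          ((1 - q ^ (d * m + x + a)) / (1 - q ^ d)) ^ n‖)) ∧
    (1 + q) * ∑' k : ℕ, (-1 : ℂ) ^ k * w ^ k * q ^ (h * k) *
        ((1 - q ^ (k + x)) / (1 - q)) ^ n
      = (1 + q) / (1 + q ^ d) * ((1 - q ^ d) / (1 - q)) ^ n *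
          ∑ a ∈ Finset.range d, q ^ (h * a) * w ^ a * (-1 : ℂ) ^ a *
            ((1 + q ^ d) * ∑' m : ℕ, (-1 : ℂ) ^ m * w ^ (d * m) * q ^ (d * h * m) *
              ((1 - q ^ (d * m + x + a)) / (1 - q ^ d)) ^ n) :=
  twisted_hq_euler_polynomial_distribution_general q w hq hw h hh n d hd x
end

section
/- Let d be an odd positive integer and χ a Dirichlet character modulo d with complex values. Then the series [2]_q Σ_{k=1}^{∞} χ(k) (−1)^k w^k q^{hk} [k]_q^n defining the generalized twisted (h,q)-Euler number E^{(h)}_{n,q,w,χ} converges absolutely, and E^{(h)}_{n,q,w,χ} = ([2]_q/[2]_{q^d}) · ((1−q^d)/(1−q))^n · Σ_{a=1}^{d} q^{ha} w^a χ(a) (−1)^a · [2]_{q^d} Σ_{m=0}^{∞} (−1)^m w^{dm} q^{dhm} ((1−q^{dm+a})/(1−q^d))^n, i.e. E^{(h)}_{n,q,w,χ} = ([2]_q/[2]_{q^d}) [d]_q^n Σ_{a=1}^{d} q^{ha} w^a χ(a) (−1)^a E^{(h)}_{n,q^d,w^d}(a/d). -/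
/-!
Split the index `k ≥ 1` of the character sum by residue class: `k = d m + a` with
`1 ≤ a ≤ d`. On such a class `χ(k) = χ(a)` by periodicity, `(-1)^k = (-1)^m (-1)^a` because
`d` is odd, and `[dm + a]_q = [d]_q [m + a/d]_{q^d}`, so the class contributes a constant
multiple of the series for `E^{(h)}_{n,q^d,w^d}(a/d)`. Each of these is dominated by a geometric
series in `‖q‖`, hence so is the whole sum, being a finite union of the classes.
-/

open Finset

section ResidueClasses

variable {R : Type*} [AddCommGroup R]

theorem Nat.summable_of_forall_summable_mul_add [TopologicalSpace R] [IsTopologicalAddGroup R]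
    (d : ℕ) [NeZero d] {f : ℕ → R} (hf : ∀ b < d, Summable fun m ↦ f (d * m + b)) :
    Summable f := by
  have hres (j : ZMod d) : Summable ({n : ℕ | (n : ZMod d) = j}.indicator f) := by
    rw [← ZMod.natCast_zmod_val j, summable_indicator_mod_iff_summable]
    exact hf _ (ZMod.val_lt j)
  rw [sum_indicator_mod d f]
  convert summable_sum (s := univ) fun j _ ↦ hres j
  simp only [Finset.sum_apply]

theorem Nat.tsum_eq_sum_range_tsum_mul_add [UniformSpace R] [IsUniformAddGroup R]
    [CompleteSpace R] [T0Space R] {f : ℕ → R} (hf : Summable f) (d : ℕ) [NeZero d] :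
    ∑' n, f n = ∑ b ∈ range d, ∑' m, f (d * m + b) := by
  rw [Nat.sumByResidueClasses hf d]
  obtain ⟨d, rfl⟩ : ∃ e, d = e + 1 := ⟨d - 1, by have := NeZero.ne d; omega⟩
  rw [← Fin.sum_univ_eq_sum_range (fun b ↦ ∑' m, f ((d + 1) * m + b))]
  refine sum_congr rfl fun b _ ↦ ?_
  exact tsum_congr fun m ↦ by rw [add_comm]; rfl

theorem Nat.summable_succ_of_forall_summable_mul_add [TopologicalSpace R]
    [IsTopologicalAddGroup R] (d : ℕ) [NeZero d] {f : ℕ → R}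
    (hf : ∀ a ∈ Icc 1 d, Summable fun m ↦ f (d * m + a)) : Summable fun k ↦ f (k + 1) :=
  Nat.summable_of_forall_summable_mul_add d fun b hb ↦ by
    simpa only [add_assoc] using hf (b + 1) (mem_Icc.2 ⟨by omega, hb⟩)

theorem Nat.tsum_succ_eq_sum_Icc_tsum_mul_add [UniformSpace R] [IsUniformAddGroup R]
    [CompleteSpace R] [T0Space R] {f : ℕ → R} (hf : Summable fun k ↦ f (k + 1)) (d : ℕ)
    [NeZero d] : ∑' k, f (k + 1) = ∑ a ∈ Icc 1 d, ∑' m, f (d * m + a) := by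
  rw [Nat.tsum_eq_sum_range_tsum_mul_add hf d, ← Ico_add_one_right_eq_Icc, sum_Ico_eq_sum_range,
    add_tsub_cancel_right]
  simp only [add_assoc, add_comm 1]

end ResidueClasses

theorem norm_one_sub_div_le {z : ℂ} (hz : ‖z‖ ≤ 1) (c : ℂ) :
    ‖(1 - z) / c‖ ≤ 2 / ‖c‖ := by
  rw [norm_div]
  gcongr
  calc ‖1 - z‖ ≤ ‖(1 : ℂ)‖ + ‖z‖ := norm_sub_le _ _
    _ ≤ 2 := by rw [norm_one]; linarith

noncomputable def twistedEulerCharTerm (χ : ℤ → ℂ) (q w : ℂ) (h n k : ℕ) : ℂ :=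
  χ k * (-1) ^ k * w ^ k * q ^ (h * k) * ((1 - q ^ k) / (1 - q)) ^ n

section

variable {q w : ℂ} {d h : ℕ}

theorem summable_norm_twisted_euler_term (hq : ‖q‖ < 1) (hw : ‖w‖ ≤ 1) (hdh : 0 < d * h)
    (a n : ℕ) : Summable fun m : ℕ ↦ ‖(-1 : ℂ) ^ m * w ^ (d * m) * q ^ (d * h * m) *
      ((1 - q ^ (d * m + a)) / (1 - q ^ d)) ^ n‖ := by
  have hq1 : ‖q‖ ≤ 1 := hq.le
  refine .of_nonneg_of_le (fun _ ↦ norm_nonneg _) (fun m ↦ ?_)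
    ((summable_geometric_of_lt_one (norm_nonneg q) hq).mul_left ((2 / ‖1 - q ^ d‖) ^ n))
  have hw' : ‖w‖ ^ (d * m) ≤ 1 := pow_le_one₀ (norm_nonneg w) hw
  have hq' : ‖q‖ ^ (d * h * m) ≤ ‖q‖ ^ m :=
    pow_le_pow_of_le_one (norm_nonneg q) hq1 (Nat.le_mul_of_pos_left m hdh)
  have hfrac : ‖(1 - q ^ (d * m + a)) / (1 - q ^ d)‖ ≤ 2 / ‖1 - q ^ d‖ :=
    norm_one_sub_div_le (by rw [norm_pow]; exact pow_le_one₀ (norm_nonneg q) hq1) _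
  simp only [norm_mul, norm_pow, norm_neg, norm_one, one_pow, one_mul]
  calc ‖w‖ ^ (d * m) * ‖q‖ ^ (d * h * m) * ‖(1 - q ^ (d * m + a)) / (1 - q ^ d)‖ ^ n
      ≤ 1 * ‖q‖ ^ m * (2 / ‖1 - q ^ d‖) ^ n := by gcongr
    _ = (2 / ‖1 - q ^ d‖) ^ n * ‖q‖ ^ m := by ring

theorem twistedEulerCharTerm_mul_add {χ : ℤ → ℂ} (hχ : Function.Periodic χ d) (hd : Odd d)
    (hqd : 1 - q ^ d ≠ 0) (n m a : ℕ) :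
    twistedEulerCharTerm χ q w h n (d * m + a) =
      q ^ (h * a) * w ^ a * χ a * (-1) ^ a * ((1 - q ^ d) / (1 - q)) ^ n *
        ((-1) ^ m * w ^ (d * m) * q ^ (d * h * m) *
          ((1 - q ^ (d * m + a)) / (1 - q ^ d)) ^ n) := by
  have hχ' : χ ((d * m + a : ℕ) : ℤ) = χ a := by
    simpa [add_comm, mul_comm] using hχ.nat_mul m a
  have hsign : (-1 : ℂ) ^ (d * m + a) = (-1) ^ m * (-1) ^ a := by
    rw [pow_add, pow_mul, hd.neg_one_pow]
  -- `[dm + a]_q = [d]_q [m + a/d]_{q^d}`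
  have hfrac : (1 - q ^ (d * m + a)) / (1 - q) =
      (1 - q ^ d) / (1 - q) * ((1 - q ^ (d * m + a)) / (1 - q ^ d)) :=
    (div_mul_div_cancel₀' hqd _ _).symm
  rw [twistedEulerCharTerm, hχ', hsign, hfrac, mul_pow]
  ring

end

theorem generalized_twisted_hq_euler_number_distribution_general
    (q w : ℂ) (hq : ‖q‖ < 1) (hw : ‖w‖ ≤ 1)
    (h : ℕ) (hh : 1 ≤ h) (n : ℕ)
    (d : ℕ) (hd : Odd d) (hdpos : 0 < d)
    (χ : ℤ → ℂ) (hχper : ∀ a : ℤ, χ (a + d) = χ a) :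
    Summable (fun k : ℕ =>
        ‖χ ((k : ℤ) + 1) * (-1 : ℂ) ^ (k + 1) * w ^ (k + 1) * q ^ (h * (k + 1)) *
          ((1 - q ^ (k + 1)) / (1 - q)) ^ n‖) ∧
    (∀ a ∈ Finset.Icc 1 d, Summable (fun m : ℕ =>
        ‖(-1 : ℂ) ^ m * w ^ (d * m) * q ^ (d * h * m) *
          ((1 - q ^ (d * m + a)) / (1 - q ^ d)) ^ n‖)) ∧
    (1 + q) * ∑' k : ℕ, χ ((k : ℤ) + 1) * (-1 : ℂ) ^ (k + 1) * w ^ (k + 1) *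
        q ^ (h * (k + 1)) * ((1 - q ^ (k + 1)) / (1 - q)) ^ n
      = (1 + q) / (1 + q ^ d) * ((1 - q ^ d) / (1 - q)) ^ n *
          ∑ a ∈ Finset.Icc 1 d, q ^ (h * a) * w ^ a * χ (a : ℤ) * (-1 : ℂ) ^ a *
            ((1 + q ^ d) * ∑' m : ℕ, (-1 : ℂ) ^ m * w ^ (d * m) * q ^ (d * h * m) *
              ((1 - q ^ (d * m + a)) / (1 - q ^ d)) ^ n) := by
  have : NeZero d := ⟨hdpos.ne'⟩
  have hqd : ‖q ^ d‖ < 1 := by rw [norm_pow]; exact pow_lt_one₀ (norm_nonneg q) hq hdpos.ne'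
  have h1qd : 1 - q ^ d ≠ 0 := sub_ne_zero.2 fun h ↦ by simp [← h] at hqd
  have h1pqd : 1 + q ^ d ≠ 0 := fun h ↦ by simp [eq_neg_of_add_eq_zero_right h] at hqd
  set T := twistedEulerCharTerm χ q w h n
  have hT (k : ℕ) : χ ((k : ℤ) + 1) * (-1) ^ (k + 1) * w ^ (k + 1) * q ^ (h * (k + 1)) *
      ((1 - q ^ (k + 1)) / (1 - q)) ^ n = T (k + 1) := by
    simp [T, twistedEulerCharTerm]
  simp only [hT]
  have hinner := summable_norm_twisted_euler_term hq hw (Nat.mul_pos hdpos hh) (n := n)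
  have hclass (a : ℕ) (_ : a ∈ Icc 1 d) : Summable fun m ↦ ‖T (d * m + a)‖ := by
    simp only [T, twistedEulerCharTerm_mul_add hχper hd h1qd]
    exact ((hinner a).mul_left _).congr fun m ↦ (norm_mul _ _).symm
  have hsum : Summable fun k ↦ ‖T (k + 1)‖ :=
    Nat.summable_succ_of_forall_summable_mul_add d (f := fun k ↦ ‖T k‖) hclass
  refine ⟨hsum, fun a _ ↦ hinner a, ?_⟩
  rw [Nat.tsum_succ_eq_sum_Icc_tsum_mul_add hsum.of_norm d, mul_sum, mul_sum]
  refine sum_congr rfl fun a _ ↦ ?_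
  rw [tsum_congr (twistedEulerCharTerm_mul_add hχper hd h1qd n · a), tsum_mul_left]
  field_simp

/-- For `q ∈ ℂ` with `0 < |q| < 1`, `|w| ≤ 1`, `h ≥ 1`, `n ≥ 0`, `d` odd
positive and `χ` a Dirichlet character modulo `d`: the series
`[2]_q ∑_{k≥1} χ(k) (−1)^k w^k q^{hk} [k]_q^n` defining the generalized twisted
`(h,q)`-Euler number `E^{(h)}_{n,q,w,χ}` converges absolutely and
`E^{(h)}_{n,q,w,χ} = ([2]_q/[2]_{q^d}) [d]_q^n ∑_{a=1}^{d} q^{ha} w^a χ(a) (−1)^a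
  E^{(h)}_{n,q^d,w^d}(a/d)`, the inner values being given by their convergent series. -/
theorem generalized_twisted_hq_euler_number_distribution
    (q w : ℂ) (hq0 : q ≠ 0) (hq : ‖q‖ < 1) (hw : ‖w‖ ≤ 1)
    (h : ℕ) (hh : 1 ≤ h) (n : ℕ)
    (d : ℕ) (hd : Odd d) (hdpos : 0 < d)
    (χ : ℤ → ℂ) (hχper : ∀ a : ℤ, χ (a + d) = χ a)
    (hχmul : ∀ a b : ℤ, χ (a * b) = χ a * χ b) (hχone : χ 1 = 1)
    (hχzero : ∀ a : ℤ, 1 < Int.gcd a d → χ a = 0) :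
    Summable (fun k : ℕ =>
        ‖χ ((k : ℤ) + 1) * (-1 : ℂ) ^ (k + 1) * w ^ (k + 1) * q ^ (h * (k + 1)) *
          ((1 - q ^ (k + 1)) / (1 - q)) ^ n‖) ∧
    (∀ a ∈ Finset.Icc 1 d, Summable (fun m : ℕ =>
        ‖(-1 : ℂ) ^ m * w ^ (d * m) * q ^ (d * h * m) *
          ((1 - q ^ (d * m + a)) / (1 - q ^ d)) ^ n‖)) ∧
    (1 + q) * ∑' k : ℕ, χ ((k : ℤ) + 1) * (-1 : ℂ) ^ (k + 1) * w ^ (k + 1) *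
        q ^ (h * (k + 1)) * ((1 - q ^ (k + 1)) / (1 - q)) ^ n
      = (1 + q) / (1 + q ^ d) * ((1 - q ^ d) / (1 - q)) ^ n *
          ∑ a ∈ Finset.Icc 1 d, q ^ (h * a) * w ^ a * χ (a : ℤ) * (-1 : ℂ) ^ a *
            ((1 + q ^ d) * ∑' m : ℕ, (-1 : ℂ) ^ m * w ^ (d * m) * q ^ (d * h * m) *
              ((1 - q ^ (d * m + a)) / (1 - q ^ d)) ^ n) :=
  generalized_twisted_hq_euler_number_distribution_general q w hq hw h hh n d hd hdpos χ hχper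
end

section
/- For every integer x ≥ 0, the twisted (h,q)-Euler polynomial satisfies the addition formula E^{(h)}_{n,q,w}(x) = Σ_{j=0}^{n} C(n,j) q^{xj} [x]_q^{n−j} E^{(h)}_{j,q,w}, where E^{(h)}_{j,q,w} = E^{(h)}_{j,q,w}(0) are the twisted (h,q)-Euler numbers. -/
open Finset

/-! The `q`-integers satisfy `[k + x]_q = q^x [k]_q + [x]_q`, so the binomial theorem expands
each term of the series for `E^{(h)}_{n,q,w}(x)` into a finite combination of the terms of the
series for the numbers `E^{(h)}_{j,q,w}`, `j ≤ n`. Since `|q| < 1` and `|w| ≤ 1` these series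
are dominated by the geometric series `∑ |q|^k`, so the finite sum can be taken out of the
infinite one. -/

section QInt

variable {K : Type*}

/-- Holds also at `q = 1`, where both sides are `0` because of division by zero. -/
theorem q_int_add [Field K] (q : K) (k x : ℕ) :
    (1 - q ^ (k + x)) / (1 - q) = q ^ x * ((1 - q ^ k) / (1 - q)) + (1 - q ^ x) / (1 - q) := by
  rw [show 1 - q ^ (k + x) = q ^ x * (1 - q ^ k) + (1 - q ^ x) by ring, add_div, mul_div_assoc]

theorem q_int_add_pow [Field K] (q : K) (k x n : ℕ) :
    ((1 - q ^ (k + x)) / (1 - q)) ^ n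
      = ∑ j ∈ range (n + 1), (n.choose j : K) * q ^ (x * j) * ((1 - q ^ x) / (1 - q)) ^ (n - j) *
          ((1 - q ^ k) / (1 - q)) ^ j := by
  rw [q_int_add, add_pow]
  refine sum_congr rfl fun j _ => ?_
  rw [mul_pow, ← pow_mul]
  ring

theorem norm_q_int_le [NormedField K] {q : K} (hq : ‖q‖ ≤ 1) (k : ℕ) :
    ‖(1 - q ^ k) / (1 - q)‖ ≤ 2 / ‖1 - q‖ := by
  rw [norm_div]
  gcongr
  calc ‖1 - q ^ k‖ ≤ ‖(1 : K)‖ + ‖q ^ k‖ := norm_sub_le _ _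
    _ ≤ 1 + 1 := by
      rw [norm_one, norm_pow]
      gcongr
      exact pow_le_one₀ (norm_nonneg q) hq
    _ = 2 := one_add_one_eq_two

theorem summable_twisted_hq_euler_terms [NormedField K] [CompleteSpace K] {q w : K}
    (hq : ‖q‖ < 1) (hw : ‖w‖ ≤ 1) {h : ℕ} (hh : 1 ≤ h) (j : ℕ) :
    Summable fun k : ℕ => (-1 : K) ^ k * w ^ k * q ^ (h * k) * ((1 - q ^ k) / (1 - q)) ^ j := by
  refine Summable.of_norm_bounded
    ((summable_geometric_of_lt_one (norm_nonneg q) hq).mul_left ((2 / ‖1 - q‖) ^ j)) fun k => ?_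
  have hw_pow : ‖w‖ ^ k ≤ 1 := pow_le_one₀ (norm_nonneg w) hw
  have hq_pow : ‖q‖ ^ (h * k) ≤ ‖q‖ ^ k :=
    pow_le_pow_of_le_one (norm_nonneg q) hq.le (Nat.le_mul_of_pos_left k hh)
  have hq_int : ‖(1 - q ^ k) / (1 - q)‖ ^ j ≤ (2 / ‖1 - q‖) ^ j :=
    pow_le_pow_left₀ (norm_nonneg _) (norm_q_int_le hq.le k) j
  simp only [norm_mul, norm_pow, norm_neg, norm_one, one_pow, one_mul]
  calc ‖w‖ ^ k * ‖q‖ ^ (h * k) * ‖(1 - q ^ k) / (1 - q)‖ ^ j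
      ≤ 1 * ‖q‖ ^ k * (2 / ‖1 - q‖) ^ j := by gcongr
    _ = (2 / ‖1 - q‖) ^ j * ‖q‖ ^ k := by ring

end QInt

theorem twisted_hq_euler_polynomial_addition_general
    (q w : ℂ) (hq : ‖q‖ < 1) (hw : ‖w‖ ≤ 1)
    (h : ℕ) (hh : 1 ≤ h) (n : ℕ) (x : ℕ) :
    (1 + q) * ∑' k : ℕ, (-1 : ℂ) ^ k * w ^ k * q ^ (h * k) *
        ((1 - q ^ (k + x)) / (1 - q)) ^ n
      = ∑ j ∈ Finset.range (n + 1),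
          (n.choose j : ℂ) * q ^ (x * j) * ((1 - q ^ x) / (1 - q)) ^ (n - j) *
            ((1 + q) * ∑' k : ℕ, (-1 : ℂ) ^ k * w ^ k * q ^ (h * k) *
              ((1 - q ^ k) / (1 - q)) ^ j) := by
  have expand (k : ℕ) : (-1 : ℂ) ^ k * w ^ k * q ^ (h * k) * ((1 - q ^ (k + x)) / (1 - q)) ^ n
      = ∑ j ∈ range (n + 1), (n.choose j : ℂ) * q ^ (x * j) * ((1 - q ^ x) / (1 - q)) ^ (n - j) *
          ((-1 : ℂ) ^ k * w ^ k * q ^ (h * k) * ((1 - q ^ k) / (1 - q)) ^ j) := by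
    rw [q_int_add_pow, mul_sum]
    exact sum_congr rfl fun j _ => by ring
  rw [tsum_congr expand, Summable.tsum_finsetSum fun j _ =>
    (summable_twisted_hq_euler_terms hq hw hh j).mul_left _, mul_sum]
  refine sum_congr rfl fun j _ => ?_
  rw [tsum_mul_left]
  ring

/-- addition formula for twisted `(h,q)`-Euler polynomials. For `q ∈ ℂ`
with `0 < |q| < 1`, `|w| ≤ 1`, `h ≥ 1`, `n ≥ 0` and every integer `x ≥ 0`:
`E^{(h)}_{n,q,w}(x) = ∑_{j≤n} C(n,j) q^{xj} [x]_q^{n−j} E^{(h)}_{j,q,w}`, where both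
sides are given by their convergent series (`E^{(h)}_{j,q,w} = E^{(h)}_{j,q,w}(0)`). -/
theorem twisted_hq_euler_polynomial_addition
    (q w : ℂ) (hq0 : q ≠ 0) (hq : ‖q‖ < 1) (hw : ‖w‖ ≤ 1)
    (h : ℕ) (hh : 1 ≤ h) (n : ℕ) (x : ℕ) :
    (1 + q) * ∑' k : ℕ, (-1 : ℂ) ^ k * w ^ k * q ^ (h * k) *
        ((1 - q ^ (k + x)) / (1 - q)) ^ n
      = ∑ j ∈ Finset.range (n + 1),
          (n.choose j : ℂ) * q ^ (x * j) * ((1 - q ^ x) / (1 - q)) ^ (n - j) *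
            ((1 + q) * ∑' k : ℕ, (-1 : ℂ) ^ k * w ^ k * q ^ (h * k) *
              ((1 - q ^ k) / (1 - q)) ^ j) :=
  twisted_hq_euler_polynomial_addition_general q w hq hw h hh n x
end

section
/- (Theorem 1, distribution property.) For all integers a ≥ 0 and N ≥ 0, each denominator 1 + ξ^{dp^N} q^{(h+j)dp^N} (0 ≤ j ≤ n) has absolute value 1 (in particular is nonzero), and Σ_{i=0}^{p−1} μ^{(h)}_{n,ξ,q}(a + i·dp^N, N+1) = μ^{(h)}_{n,ξ,q}(a, N); that is, the assignment a + dp^N ℤ_p ↦ μ^{(h)}_{n,ξ,q}(a, N) satisfies the distribution (compatibility) relation on X = proj lim ℤ/dp^Nℤ. -/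
open Filter

/-- The value `μ^{(h)}_{n,ξ,q}(a + d p^N ℤ_p)` of the twisted `(h,q)`-Euler measure:
`((1+q)/(1−q)^n) (−1)^a ξ^a q^{ha} ∑_{j≤n} C(n,j)(−1)^j q^{aj}/(1 + ξ^{dp^N} q^{(h+j)dp^N})`. -/
noncomputable def twistedEulerMeasure {K : Type*} [Field K] (p d : ℕ) (h : ℤ) (n : ℕ)
    (ξ q : K) (a N : ℕ) : K :=
  ((1 + q) / (1 - q) ^ n) * (-1 : K) ^ a * ξ ^ a * q ^ (h * (a : ℤ)) *
    ∑ j ∈ Finset.range (n + 1),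
      (n.choose j : K) * (-1 : K) ^ j * q ^ (a * j) /
        (1 + ξ ^ (d * p ^ N) * q ^ ((h + (j : ℤ)) * ((d : ℤ) * (p : ℤ) ^ N)))

/-!
Each denominator is `1 + x` with `‖x - 1‖ < 1`: both `q` and the `p`-power root of unity `ξ`
lie in the multiplicative group `{x | ‖x - 1‖ < 1}` (for `ξ` because `x ↦ x ^ p` is congruent
to `(x - 1) ^ p + 1` modulo `p`), and `‖2‖ = 1` as `p` is odd, so `‖1 + x‖ = ‖2‖ = 1`.
The distribution relation is then algebraic: with `D = d p^N` and `x_j = ξ^D q^{(h+j)D}`, the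
`i`-th summand on the left contributes `(-x_j)^i / (1 + x_j^p)` to the `j`-th term, and
`∑_{i<p} (-x)^i = (1 + x^p) / (1 + x)` for odd `p`.
-/

open Finset

section Ultrametric

open IsUltrametricDist

lemma norm_eq_of_norm_sub_lt {E : Type*} [SeminormedAddGroup E] [IsUltrametricDist E] {x y : E}
    (h : ‖x - y‖ < ‖y‖) : ‖x‖ = ‖y‖ := by
  rw [← sub_add_cancel x y, norm_add_eq_max_of_norm_ne_norm h.ne, max_eq_right h.le]

variable {K : Type*} [NormedField K] [IsUltrametricDist K]

lemma norm_eq_one_of_norm_sub_one_lt_one {x : K} (hx : ‖x - 1‖ < 1) : ‖x‖ = 1 :=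
  norm_one (α := K) ▸ norm_eq_of_norm_sub_lt (by rwa [norm_one])

lemma norm_mul_sub_one_lt_one {x y : K} (hx : ‖x - 1‖ < 1) (hy : ‖y - 1‖ < 1) :
    ‖x * y - 1‖ < 1 := by
  rw [show x * y - 1 = x * (y - 1) + (x - 1) by ring]
  refine (norm_add_le_max _ _).trans_lt (max_lt ?_ hx)
  rwa [norm_mul, norm_eq_one_of_norm_sub_one_lt_one hx, one_mul]

lemma norm_pow_sub_one_lt_one {x : K} (hx : ‖x - 1‖ < 1) (k : ℕ) : ‖x ^ k - 1‖ < 1 := by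
  induction k with
  | zero => simp
  | succ k ih => rw [pow_succ]; exact norm_mul_sub_one_lt_one ih hx

lemma norm_zpow_sub_one_lt_one {x : K} (hx : ‖x - 1‖ < 1) (k : ℤ) : ‖x ^ k - 1‖ < 1 := by
  have hx1 := norm_eq_one_of_norm_sub_one_lt_one hx
  have hinv : ‖x⁻¹ - 1‖ < 1 := by
    have hx0 : x ≠ 0 := norm_ne_zero_iff.mp (by simp [hx1])
    rwa [show x⁻¹ - 1 = -x⁻¹ * (x - 1) by field_simp; ring, norm_mul, norm_neg, norm_inv, hx1,
      inv_one, one_mul]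
  obtain ⟨k, rfl | rfl⟩ := k.eq_nat_or_neg
  · simpa using norm_pow_sub_one_lt_one hx k
  · simpa [inv_pow] using norm_pow_sub_one_lt_one hinv k

lemma norm_one_add_eq_one (h2 : ‖(2 : K)‖ = 1) {x : K} (hx : ‖x - 1‖ < 1) : ‖1 + x‖ = 1 := by
  rw [← h2]
  exact norm_eq_of_norm_sub_lt (by rwa [h2, show 1 + x - 2 = x - 1 by ring])

lemma norm_sub_one_lt_one_of_norm_pow_prime_sub_one_lt_one {p : ℕ} (hp : p.Prime)
    (hpK : ‖(p : K)‖ < 1) {x : K} (hx : ‖x ^ p - 1‖ < 1) : ‖x - 1‖ < 1 := by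
  by_contra! ht
  set t := x - 1
  obtain ⟨r, hr⟩ : ∃ r, p = r + 1 := ⟨p - 1, by have := hp.pos; omega⟩
  set S := ∑ k ∈ range r, t ^ (k + 1) * (p.choose (k + 1) : K)
  have hexpand : x ^ p - 1 - t ^ p = S := by
    rw [show x = t + 1 by ring, add_pow, hr, sum_range_succ, sum_range_succ', ← hr]
    simp only [S, one_pow, mul_one, pow_zero, Nat.choose_zero_right, Nat.choose_self, Nat.cast_one]
    ring
  have hS : ‖S‖ ≤ ‖(p : K)‖ * ‖t‖ ^ p := by
    refine norm_sum_le_of_forall_le_of_nonneg (by positivity) fun k hk => ?_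
    have hkp : k + 1 < p := by simp at hk; omega
    obtain ⟨c, hc⟩ := hp.dvd_choose_self k.succ_ne_zero hkp
    rw [hc, norm_mul, norm_pow, Nat.cast_mul, norm_mul, mul_comm]
    exact mul_le_mul (mul_le_of_le_one_right (norm_nonneg _) (norm_natCast_le_one K c))
      (pow_le_pow_right₀ ht hkp.le) (by positivity) (norm_nonneg _)
  have hlt : ‖(x ^ p - 1) - t ^ p‖ < ‖t ^ p‖ := by
    rw [hexpand, norm_pow]
    exact hS.trans_lt (mul_lt_of_lt_one_left (by positivity) hpK)
  rw [norm_eq_of_norm_sub_lt hlt, norm_pow] at hx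
  exact hx.not_ge (one_le_pow₀ ht)

lemma norm_sub_one_lt_one_of_pow_prime_pow_eq_one {p : ℕ} (hp : p.Prime) (hpK : ‖(p : K)‖ < 1)
    {x : K} {m : ℕ} (hx : x ^ p ^ m = 1) : ‖x - 1‖ < 1 := by
  induction m generalizing x with
  | zero => simp_all
  | succ m ih =>
    rw [pow_succ', pow_mul] at hx
    exact norm_sub_one_lt_one_of_norm_pow_prime_sub_one_lt_one hp hpK (ih hx)

end Ultrametric

lemma one_add_mul_geom_sum_neg {R : Type*} [Ring R] (x : R) {p : ℕ} (hp : Odd p) :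
    (1 + x) * ∑ i ∈ range p, (-x) ^ i = 1 + x ^ p := by
  simpa [hp.neg_pow] using mul_neg_geom_sum (-x) p

section Distribution

variable {K : Type*} [Field K] {p d : ℕ} {h : ℤ} {n : ℕ} {ξ q : K}

/-- The `j`-th denominator of `twistedEulerMeasure p d h n ξ q a N` is
`1 + twistedEulerRatio p d h ξ q N j`. -/
def twistedEulerRatio (p d : ℕ) (h : ℤ) (ξ q : K) (N j : ℕ) : K :=
  ξ ^ (d * p ^ N) * q ^ ((h + (j : ℤ)) * ((d : ℤ) * (p : ℤ) ^ N))

lemma twistedEulerRatio_succ (N j : ℕ) :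
    twistedEulerRatio p d h ξ q (N + 1) j = twistedEulerRatio p d h ξ q N j ^ p := by
  rw [twistedEulerRatio, twistedEulerRatio, mul_pow, ← pow_mul, ← zpow_natCast (q ^ _) p,
    ← zpow_mul]
  congr 2 <;> ring

lemma twistedEulerMeasure_add_mul_succ (hp : Odd p) (hd : Odd d) (hq : q ≠ 0) (a N i : ℕ) :
    twistedEulerMeasure p d h n ξ q (a + i * (d * p ^ N)) (N + 1) =
      ∑ j ∈ range (n + 1),
        ((1 + q) / (1 - q) ^ n) * (-1 : K) ^ a * ξ ^ a * q ^ (h * (a : ℤ)) *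
          ((n.choose j : K) * (-1 : K) ^ j * q ^ (a * j)) *
          ((-twistedEulerRatio p d h ξ q N j) ^ i / (1 + twistedEulerRatio p d h ξ q N j ^ p)) := by
  rw [twistedEulerMeasure, mul_sum]
  refine sum_congr rfl fun j _ => ?_
  have hsign : (-1 : K) ^ (a + i * (d * p ^ N)) = (-1) ^ a * (-1) ^ i := by
    rw [pow_add, pow_mul', (hd.mul hp.pow).neg_one_pow]
  have hξ : ξ ^ (a + i * (d * p ^ N)) = ξ ^ a * (ξ ^ (d * p ^ N)) ^ i := by
    rw [pow_add, pow_mul']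
  have hqpow : q ^ (h * ((a + i * (d * p ^ N) : ℕ) : ℤ)) * q ^ ((a + i * (d * p ^ N)) * j) =
      q ^ (h * (a : ℤ)) * q ^ (a * j) * (q ^ ((h + (j : ℤ)) * ((d : ℤ) * (p : ℤ) ^ N))) ^ i := by
    simp only [← zpow_natCast, ← zpow_mul, ← zpow_add₀ hq]
    congr 1
    push_cast
    ring
  rw [← twistedEulerRatio_succ, neg_pow (twistedEulerRatio p d h ξ q N j), hsign, hξ]
  simp only [twistedEulerRatio, mul_pow]
  linear_combination (((1 + q) / (1 - q) ^ n) * (-1 : K) ^ a * ξ ^ a * (-1) ^ i *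
    (ξ ^ (d * p ^ N)) ^ i * (n.choose j : K) * (-1 : K) ^ j /
    (1 + ξ ^ (d * p ^ (N + 1)) * q ^ ((h + (j : ℤ)) * ((d : ℤ) * (p : ℤ) ^ (N + 1))))) * hqpow

theorem twistedEulerMeasure_sum_range_add_mul (hp : Odd p) (hd : Odd d) (hq : q ≠ 0) (a N : ℕ)
    (hden : ∀ j ≤ n, 1 + twistedEulerRatio p d h ξ q (N + 1) j ≠ 0) :
    ∑ i ∈ range p, twistedEulerMeasure p d h n ξ q (a + i * (d * p ^ N)) (N + 1) =
      twistedEulerMeasure p d h n ξ q a N := by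
  simp only [twistedEulerMeasure_add_mul_succ hp hd hq]
  rw [sum_comm, twistedEulerMeasure, mul_sum]
  refine sum_congr rfl fun j hj => ?_
  have hdenp : 1 + twistedEulerRatio p d h ξ q N j ^ p ≠ 0 := by
    rw [← twistedEulerRatio_succ]
    exact hden j (Nat.lt_succ_iff.mp (mem_range.mp hj))
  have hgeom : (∑ i ∈ range p, (-twistedEulerRatio p d h ξ q N j) ^ i) /
      (1 + twistedEulerRatio p d h ξ q N j ^ p) = (1 + twistedEulerRatio p d h ξ q N j)⁻¹ :=
    eq_inv_of_mul_eq_one_right <| by rw [← mul_div_assoc, one_add_mul_geom_sum_neg _ hp,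
      div_self hdenp]
  rw [← mul_sum, ← sum_div, hgeom, twistedEulerRatio]
  ring

end Distribution

theorem twistedEulerMeasure_distribution_general
    {p : ℕ} [Fact p.Prime] (hp : Odd p)
    {K : Type*} [NontriviallyNormedField K] [IsUltrametricDist K]
    [Algebra ℚ_[p] K] (halg : ∀ x : ℚ_[p], ‖algebraMap ℚ_[p] K x‖ = ‖x‖)
    (q ξ : K) (hq : ‖1 - q‖ < (p : ℝ) ^ (-(1 : ℝ) / ((p : ℝ) - 1)))
    (m : ℕ) (hξ : ξ ^ p ^ m = 1) (h : ℤ) (n : ℕ)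
    {d : ℕ} (hd : Odd d) :
    (∀ N : ℕ, ∀ j ≤ n,
        ‖1 + ξ ^ (d * p ^ N) * q ^ ((h + (j : ℤ)) * ((d : ℤ) * (p : ℤ) ^ N))‖ = 1) ∧
    (∀ a N : ℕ,
        ∑ i ∈ Finset.range p,
            twistedEulerMeasure p d h n ξ q (a + i * (d * p ^ N)) (N + 1)
          = twistedEulerMeasure p d h n ξ q a N) := by
  have hprime : p.Prime := Fact.out
  have hnorm (k : ℕ) : ‖(k : K)‖ = ‖(k : ℚ_[p])‖ := by
    rw [← map_natCast (algebraMap ℚ_[p] K), halg]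
  have hpK : ‖(p : K)‖ < 1 := hnorm p ▸ Padic.norm_p_lt_one
  have h2K : ‖(2 : K)‖ = 1 := by
    have h2 := hnorm 2
    rw [Padic.norm_natCast_eq_one_iff.mpr (Nat.coprime_two_right.mpr hp)] at h2
    exact_mod_cast h2
  have hq1 : ‖q - 1‖ < 1 := by
    have hp1 : (1 : ℝ) < p := by exact_mod_cast hprime.one_lt
    rw [norm_sub_rev]
    exact hq.trans (Real.rpow_lt_one_of_one_lt_of_neg hp1
      (div_neg_of_neg_of_pos (by norm_num) (by linarith)))
  have hξ1 : ‖ξ - 1‖ < 1 := norm_sub_one_lt_one_of_pow_prime_pow_eq_one hprime hpK hξ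
  have hden (A : ℕ) (B : ℤ) : ‖1 + ξ ^ A * q ^ B‖ = 1 :=
    norm_one_add_eq_one h2K (norm_mul_sub_one_lt_one (norm_pow_sub_one_lt_one hξ1 A)
      (norm_zpow_sub_one_lt_one hq1 B))
  have hq0 : q ≠ 0 := by rintro rfl; norm_num at hq1
  refine ⟨fun N j _ => hden _ _, fun a N =>
    twistedEulerMeasure_sum_range_add_mul hp hd hq0 a N fun j _ => ?_⟩
  exact norm_ne_zero_iff.mp <| by rw [twistedEulerRatio, hden]; exact one_ne_zero

/-- Theorem 1, distribution property: each denominator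
`1 + ξ^{dp^N} q^{(h+j)dp^N}` has absolute value `1`, and
`∑_{i<p} μ^{(h)}_{n,ξ,q}(a + i·dp^N + dp^{N+1}ℤ_p) = μ^{(h)}_{n,ξ,q}(a + dp^N ℤ_p)`. -/
theorem twistedEulerMeasure_distribution
    {p : ℕ} [Fact p.Prime] (hp : Odd p)
    {K : Type*} [NontriviallyNormedField K] [CompleteSpace K] [IsUltrametricDist K]
    [Algebra ℚ_[p] K] (halg : ∀ x : ℚ_[p], ‖algebraMap ℚ_[p] K x‖ = ‖x‖)
    (q ξ : K) (hq : ‖1 - q‖ < (p : ℝ) ^ (-(1 : ℝ) / ((p : ℝ) - 1)))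
    (m : ℕ) (hξ : ξ ^ p ^ m = 1) (h : ℤ) (n : ℕ)
    {d : ℕ} (hd : Odd d) (hdpos : 0 < d) :
    (∀ N : ℕ, ∀ j ≤ n,
        ‖1 + ξ ^ (d * p ^ N) * q ^ ((h + (j : ℤ)) * ((d : ℤ) * (p : ℤ) ^ N))‖ = 1) ∧
    (∀ a N : ℕ,
        ∑ i ∈ Finset.range p,
            twistedEulerMeasure p d h n ξ q (a + i * (d * p ^ N)) (N + 1)
          = twistedEulerMeasure p d h n ξ q a N) :=
  twistedEulerMeasure_distribution_general hp halg q ξ hq m hξ h n hd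
end

section
/- (Lemma 2.) For all integers a ≥ 0 and N ≥ 0, μ^{(h)}_{n,ξ,q}(p·a, N+1) = [p]_q^n · ((1+q)/(1+q^p)) · μ^{(h)}_{n,ξ^p,q^p}(a, N), where [p]_q = (1−q^p)/(1−q) and μ^{(h)}_{n,ξ^p,q^p} is given by the same defining formula with (ξ, q) replaced by (ξ^p, q^p); that is, for every compact-open ball U = a + dp^N ℤ_p one has μ^{(h)}_{n,ξ,q}(pU) = [p]_q^n ([2]_q/[2]_{q^p}) μ^{(h)}_{n,ξ^p,q^p}(U). -/
section Ultrametric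

variable {K : Type*} [NormedDivisionRing K] [IsUltrametricDist K]

lemma norm_le_one_of_norm_one_sub_lt_one {q : K} (hq : ‖1 - q‖ < 1) : ‖q‖ ≤ 1 := by
  have hle := IsUltrametricDist.norm_add_one_le_max_norm_one (q - 1)
  rw [sub_add_cancel, norm_sub_rev] at hle
  exact hle.trans (max_le hq.le le_rfl)

lemma norm_one_sub_pow_lt_one {q : K} (hq : ‖1 - q‖ < 1) (k : ℕ) : ‖1 - q ^ k‖ < 1 := by
  induction k with
  | zero => simp
  | succ k ih =>
    have hsplit : 1 - q ^ (k + 1) = (1 - q ^ k) + q ^ k * (1 - q) := by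
      rw [pow_succ, mul_sub, mul_one]; abel
    have hterm : ‖q ^ k * (1 - q)‖ < 1 := by
      rw [norm_mul, norm_pow]
      calc ‖q‖ ^ k * ‖1 - q‖ ≤ 1 * ‖1 - q‖ := by
            gcongr
            exact pow_le_one₀ (norm_nonneg q) (norm_le_one_of_norm_one_sub_lt_one hq)
        _ < 1 := by rwa [one_mul]
    rw [hsplit]
    exact (IsUltrametricDist.norm_add_le_max _ _).trans_lt (max_lt ih hterm)

end Ultrametric

lemma one_add_ne_zero_of_norm_one_sub_lt {K : Type*} [NormedRing K] {y : K}
    (h2 : ‖(2 : K)‖ = 1) (hy : ‖1 - y‖ < 1) : 1 + y ≠ 0 := by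
  intro hzero
  rw [eq_neg_of_add_eq_zero_right hzero, sub_neg_eq_add, one_add_one_eq_two, h2] at hy
  exact lt_irrefl 1 hy

lemma norm_two_eq_one_of_odd {p : ℕ} [Fact p.Prime] (hp : Odd p) {K : Type*} [NormedRing K]
    [Algebra ℚ_[p] K] (halg : ∀ x : ℚ_[p], ‖algebraMap ℚ_[p] K x‖ = ‖x‖) : ‖(2 : K)‖ = 1 := by
  have hcop : p.Coprime 2 :=
    (Nat.coprime_primes Fact.out Nat.prime_two).mpr fun h => by subst h; exact absurd hp (by decide)
  rw [← map_ofNat (algebraMap ℚ_[p] K), halg]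
  exact_mod_cast Padic.norm_natCast_eq_one_iff.mpr hcop

section Algebra

variable {K : Type*} [Field K]

noncomputable def twistedEulerSum (p d : ℕ) (h : ℤ) (n : ℕ) (ξ q : K) (a N : ℕ) : K :=
  (-1 : K) ^ a * ξ ^ a * q ^ (h * (a : ℤ)) *
    ∑ j ∈ Finset.range (n + 1),
      (n.choose j : K) * (-1 : K) ^ j * q ^ (a * j) /
        (1 + ξ ^ (d * p ^ N) * q ^ ((h + (j : ℤ)) * ((d : ℤ) * (p : ℤ) ^ N)))

lemma twistedEulerMeasure_eq_mul_twistedEulerSum (p d : ℕ) (h : ℤ) (n : ℕ) (ξ q : K) (a N : ℕ) :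
    twistedEulerMeasure p d h n ξ q a N
      = (1 + q) / (1 - q) ^ n * twistedEulerSum p d h n ξ q a N := by
  simp only [twistedEulerMeasure, twistedEulerSum, mul_assoc]

lemma twistedEulerSum_dilation {p : ℕ} (hp : Odd p) (d : ℕ) (h : ℤ) (n : ℕ) (ξ q : K)
    (a N : ℕ) :
    twistedEulerSum p d h n ξ q (p * a) (N + 1) = twistedEulerSum p d h n (ξ ^ p) (q ^ p) a N := by
  have hzpow : ∀ e : ℤ, q ^ (e * p) = (q ^ p) ^ e := fun e => by
    rw [← zpow_natCast q p, ← zpow_mul, mul_comm]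
  have hterm : ∀ j : ℕ,
      (n.choose j : K) * (-1 : K) ^ j * q ^ (p * a * j) /
          (1 + ξ ^ (d * p ^ (N + 1)) * q ^ ((h + (j : ℤ)) * ((d : ℤ) * (p : ℤ) ^ (N + 1))))
        = (n.choose j : K) * (-1 : K) ^ j * (q ^ p) ^ (a * j) /
          (1 + (ξ ^ p) ^ (d * p ^ N) * (q ^ p) ^ ((h + (j : ℤ)) * ((d : ℤ) * (p : ℤ) ^ N))) := by
    intro j
    rw [← hzpow, ← pow_mul, ← pow_mul, mul_assoc, pow_mul q p]
    ring_nf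
  unfold twistedEulerSum
  rw [Finset.sum_congr rfl fun j _ => hterm j, pow_mul, hp.neg_one_pow, pow_mul ξ,
    show h * ((p * a : ℕ) : ℤ) = h * a * p by push_cast; ring, hzpow]

lemma twistedEulerSum_one {n : ℕ} (hn : n ≠ 0) (p d : ℕ) (h : ℤ) (ξ : K) (a N : ℕ) :
    twistedEulerSum p d h n ξ 1 a N = 0 := by
  have halt : ∑ j ∈ Finset.range (n + 1), (n.choose j : K) * (-1 : K) ^ j = 0 := by
    have := add_pow (-1 : K) 1 n
    simp only [neg_add_cancel, zero_pow hn, one_pow, mul_one] at this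
    rw [this]
    exact Finset.sum_congr rfl fun j _ => mul_comm _ _
  simp only [twistedEulerSum, one_pow, one_zpow, mul_one, ← Finset.sum_div, halt, zero_div,
    mul_zero]

lemma one_add_div_one_sub_pow_mul_eq {x y S : K} (n : ℕ) (hy : 1 + y ≠ 0)
    (hS : y = 1 → n ≠ 0 → S = 0) :
    (1 + x) / (1 - x) ^ n * S = ((1 - y) / (1 - x)) ^ n * ((1 + x) / (1 + y)) *
      ((1 + y) / (1 - y) ^ n * S) := by
  rcases eq_or_ne n 0 with rfl | hn
  · field_simp
  rcases eq_or_ne y 1 with rfl | hy1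
  · simp [hS rfl hn]
  rw [div_pow]
  field_simp

end Algebra

theorem twistedEulerMeasure_dilation_general
    {p : ℕ} [Fact p.Prime] (hp : Odd p)
    {K : Type*} [NontriviallyNormedField K] [IsUltrametricDist K]
    [Algebra ℚ_[p] K] (halg : ∀ x : ℚ_[p], ‖algebraMap ℚ_[p] K x‖ = ‖x‖)
    (q ξ : K) (hq : ‖1 - q‖ < (p : ℝ) ^ (-(1 : ℝ) / ((p : ℝ) - 1)))
    (h : ℤ) (n : ℕ)
    {d : ℕ} :
    ∀ a N : ℕ,
      twistedEulerMeasure p d h n ξ q (p * a) (N + 1)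
        = ((1 - q ^ p) / (1 - q)) ^ n * ((1 + q) / (1 + q ^ p)) *
            twistedEulerMeasure p d h n (ξ ^ p) (q ^ p) a N := by
  intro a N
  have hp1 : (1 : ℝ) ≤ p := Nat.one_le_cast.mpr (Fact.out : p.Prime).one_le
  have hq1 : ‖1 - q‖ < 1 := hq.trans_le <| Real.rpow_le_one_of_one_le_of_nonpos hp1 <|
    div_nonpos_of_nonpos_of_nonneg (by norm_num) (sub_nonneg.mpr hp1)
  have hqp : 1 + q ^ p ≠ 0 := one_add_ne_zero_of_norm_one_sub_lt (norm_two_eq_one_of_odd hp halg)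
    (norm_one_sub_pow_lt_one hq1 p)
  rw [twistedEulerMeasure_eq_mul_twistedEulerSum, twistedEulerMeasure_eq_mul_twistedEulerSum,
    twistedEulerSum_dilation hp]
  refine one_add_div_one_sub_pow_mul_eq n hqp fun hqp_one hn => ?_
  rw [hqp_one]
  exact twistedEulerSum_one hn p d h _ a N

/-- Lemma 2: for every ball `U = a + dp^N ℤ_p`,
`μ^{(h)}_{n,ξ,q}(pU) = [p]_q^n ([2]_q/[2]_{q^p}) μ^{(h)}_{n,ξ^p,q^p}(U)`, i.e.
`μ^{(h)}_{n,ξ,q}(pa + dp^{N+1}ℤ_p) = ((1−q^p)/(1−q))^n ((1+q)/(1+q^p))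
  μ^{(h)}_{n,ξ^p,q^p}(a + dp^N ℤ_p)`. -/
theorem twistedEulerMeasure_dilation
    {p : ℕ} [Fact p.Prime] (hp : Odd p)
    {K : Type*} [NontriviallyNormedField K] [CompleteSpace K] [IsUltrametricDist K]
    [Algebra ℚ_[p] K] (halg : ∀ x : ℚ_[p], ‖algebraMap ℚ_[p] K x‖ = ‖x‖)
    (q ξ : K) (hq : ‖1 - q‖ < (p : ℝ) ^ (-(1 : ℝ) / ((p : ℝ) - 1)))
    (m : ℕ) (hξ : ξ ^ p ^ m = 1) (h : ℤ) (n : ℕ)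
    {d : ℕ} (hd : Odd d) (hdpos : 0 < d) :
    ∀ a N : ℕ,
      twistedEulerMeasure p d h n ξ q (p * a) (N + 1)
        = ((1 - q ^ p) / (1 - q)) ^ n * ((1 + q) / (1 + q ^ p)) *
            twistedEulerMeasure p d h n (ξ ^ p) (q ^ p) a N :=
  twistedEulerMeasure_dilation_general hp halg q ξ hq h n
end

section
/- (Lemma 3.) For every integer a ≥ 0, lim_{N→∞} μ^{(h)}_{n,ξ,q}(a, N) = ((1+q)/2) · (−1)^a ξ^a q^{ha} · ((1−q^a)/(1−q))^n = q^{(h−1)a} ξ^a [a]_q^n · ((1+q)/2)(−1)^a q^a; that is, the measure μ^{(h)}_{n,ξ,q} has density q^{(h−1)t} ξ^t [t]_q^n with respect to the fermionic measure μ_{−q} (whose value on a + dp^N ℤ_p is (−q)^a (1+q)/(1+q^{dp^N}) → (−1)^a q^a (1+q)/2), i.e. dμ^{(h)}_{n,ξ,q}(t) = q^{(h−1)t} ξ^t [t]_q^n dμ_{−q}(t). -/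
/-!
Since `‖p‖ < 1` and `‖q - 1‖ < 1` in `K`, the binomial expansion of `(1 + x)^p` makes
`‖q^{p^N} - 1‖` decay geometrically, so `q^{p^N} → 1`. As `ξ^{dp^N} = 1` once `N ≥ m`,
every denominator `1 + ξ^{dp^N} q^{(h+j)dp^N}` tends to `2`, and the binomial theorem sums
the numerators `C(n,j) (-1)^j q^{aj}` to `(1 - q^a)^n`.
-/

open Filter

open Topology

section Ultrametric

variable {K : Type*} [NormedField K] [IsUltrametricDist K]

theorem norm_pow_prime_sub_one_le {p : ℕ} (hp : p.Prime) {y : K} (hy : ‖y - 1‖ ≤ 1) :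
    ‖y ^ p - 1‖ ≤ ‖y - 1‖ * max ‖(p : K)‖ (‖y - 1‖ ^ (p - 1)) := by
  set x := y - 1
  set S := ∑ k ∈ Finset.Ioo 0 p, x ^ k * 1 ^ (p - k) * ((p.choose k / p : ℕ) : K)
  have hexpand : y ^ p - 1 = x ^ p + p * S := by
    have := add_pow_prime_eq' hp x 1
    rw [sub_add_cancel, one_pow] at this
    rw [this]
    ring
  have hS : ‖S‖ ≤ ‖x‖ := by
    refine IsUltrametricDist.norm_sum_le_of_forall_le_of_nonneg (norm_nonneg _) fun k hk => ?_
    have hk0 : k ≠ 0 := (Finset.mem_Ioo.mp hk).1.ne'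
    calc ‖x ^ k * 1 ^ (p - k) * ((p.choose k / p : ℕ) : K)‖
        ≤ ‖x‖ ^ k * 1 := by
          rw [one_pow, mul_one, norm_mul, norm_pow]
          gcongr
          exact IsUltrametricDist.norm_natCast_le_one K _
      _ ≤ ‖x‖ := by rw [mul_one]; exact pow_le_of_le_one (norm_nonneg _) hy hk0
  calc ‖y ^ p - 1‖ ≤ max ‖x ^ p‖ ‖(p : K) * S‖ := by
        rw [hexpand]; exact IsUltrametricDist.norm_add_le_max _ _
    _ ≤ max (‖x‖ * ‖x‖ ^ (p - 1)) (‖x‖ * ‖(p : K)‖) := by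
        rw [norm_mul, norm_pow, ← pow_succ', Nat.sub_add_cancel hp.one_le, mul_comm ‖x‖]
        gcongr
    _ = ‖x‖ * max ‖(p : K)‖ (‖x‖ ^ (p - 1)) := by
        rw [max_comm, mul_max_of_nonneg _ _ (norm_nonneg _)]

theorem norm_pow_prime_pow_sub_one_le {p : ℕ} (hp : p.Prime) {y : K} (hy : ‖y - 1‖ ≤ 1)
    (N : ℕ) :
    ‖y ^ p ^ N - 1‖ ≤ ‖y - 1‖ * max ‖(p : K)‖ (‖y - 1‖ ^ (p - 1)) ^ N := by
  set ρ := max ‖(p : K)‖ (‖y - 1‖ ^ (p - 1))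
  have hρ : ρ ≤ 1 :=
    max_le (IsUltrametricDist.norm_natCast_le_one K p) (pow_le_one₀ (norm_nonneg _) hy)
  induction N with
  | zero => simp
  | succ N ih =>
    have hle : ‖y ^ p ^ N - 1‖ ≤ ‖y - 1‖ :=
      ih.trans (mul_le_of_le_one_right (norm_nonneg _) (pow_le_one₀ (by positivity) hρ))
    rw [pow_succ, pow_mul]
    calc ‖(y ^ p ^ N) ^ p - 1‖
        ≤ ‖y ^ p ^ N - 1‖ * max ‖(p : K)‖ (‖y ^ p ^ N - 1‖ ^ (p - 1)) :=
          norm_pow_prime_sub_one_le hp (hle.trans hy)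
      _ ≤ ‖y - 1‖ * ρ ^ N * ρ := by gcongr; exact max_le_max le_rfl (by gcongr)
      _ = ‖y - 1‖ * ρ ^ (N + 1) := by ring

theorem tendsto_pow_prime_pow_nhds_one {p : ℕ} (hp : p.Prime) (hpK : ‖(p : K)‖ < 1) {y : K}
    (hy : ‖y - 1‖ < 1) : Tendsto (fun N : ℕ => y ^ p ^ N) atTop (𝓝 1) := by
  set ρ := max ‖(p : K)‖ (‖y - 1‖ ^ (p - 1))
  have hρ : ρ < 1 :=
    max_lt hpK (pow_lt_one₀ (norm_nonneg _) hy (Nat.sub_ne_zero_of_lt hp.one_lt))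
  have hbound : Tendsto (fun N : ℕ => ‖y - 1‖ * ρ ^ N) atTop (𝓝 0) := by
    simpa using (tendsto_pow_atTop_nhds_zero_of_lt_one (by positivity) hρ).const_mul ‖y - 1‖
  rw [tendsto_iff_norm_sub_tendsto_zero]
  exact squeeze_zero (fun _ => norm_nonneg _)
    (norm_pow_prime_pow_sub_one_le hp hy.le) hbound

end Ultrametric

theorem sum_range_choose_mul_neg_one_pow_mul_pow {R : Type*} [CommRing R] (y : R) (n : ℕ) :
    ∑ j ∈ Finset.range (n + 1), (n.choose j : R) * (-1) ^ j * y ^ j = (1 - y) ^ n := by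
  rw [sub_eq_neg_add, add_pow]
  refine Finset.sum_congr rfl fun j _ => ?_
  rw [neg_pow, one_pow]
  ring

theorem tendsto_one_add_pow_mul_zpow_nhds_two {K : Type*} [NormedField K] {p m d : ℕ}
    {ξ q : K} (hξ : ξ ^ p ^ m = 1) (hq : Tendsto (fun N : ℕ => q ^ p ^ N) atTop (𝓝 1))
    (k : ℤ) :
    Tendsto (fun N : ℕ => 1 + ξ ^ (d * p ^ N) * q ^ (k * ((d : ℤ) * (p : ℤ) ^ N)))
      atTop (𝓝 2) := by
  have hξN : ∀ᶠ N : ℕ in atTop, (1 : K) = ξ ^ (d * p ^ N) := by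
    filter_upwards [eventually_ge_atTop m] with N hN
    rw [← pow_sub_mul_pow p hN,
      show d * (p ^ (N - m) * p ^ m) = p ^ m * (d * p ^ (N - m)) by ring, pow_mul, hξ, one_pow]
  have hqN : Tendsto (fun N : ℕ => q ^ (k * ((d : ℤ) * (p : ℤ) ^ N))) atTop (𝓝 1) := by
    have := hq.zpow₀ (k * d) (Or.inl one_ne_zero)
    rw [one_zpow] at this
    refine this.congr fun N => ?_
    rw [← zpow_natCast, ← zpow_mul]
    push_cast
    ring_nf
  have := ((tendsto_const_nhds.congr' hξN).mul hqN).const_add (1 : K)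
  rwa [mul_one, one_add_one_eq_two] at this

theorem tendsto_twistedEulerMeasure {K : Type*} [NormedField K] (h2 : (2 : K) ≠ 0)
    {p m d : ℕ} {ξ q : K} (hξ : ξ ^ p ^ m = 1)
    (hq : Tendsto (fun N : ℕ => q ^ p ^ N) atTop (𝓝 1)) (h : ℤ) (n a : ℕ) :
    Tendsto (fun N : ℕ => twistedEulerMeasure p d h n ξ q a N) atTop
      (𝓝 (((1 + q) / 2) * (-1 : K) ^ a * ξ ^ a * q ^ (h * (a : ℤ)) *
        ((1 - q ^ a) / (1 - q)) ^ n)) := by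
  have hlim : Tendsto (fun N : ℕ => twistedEulerMeasure p d h n ξ q a N) atTop
      (𝓝 (((1 + q) / (1 - q) ^ n) * (-1 : K) ^ a * ξ ^ a * q ^ (h * (a : ℤ)) *
        ∑ j ∈ Finset.range (n + 1), (n.choose j : K) * (-1 : K) ^ j * q ^ (a * j) / 2)) :=
    tendsto_const_nhds.mul <| tendsto_finsetSum _ fun j _ =>
      tendsto_const_nhds.div (tendsto_one_add_pow_mul_zpow_nhds_two hξ hq (h + j)) h2
  convert hlim using 2
  simp_rw [← Finset.sum_div, pow_mul, sum_range_choose_mul_neg_one_pow_mul_pow, div_pow]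
  ring

theorem twistedEulerMeasure_density_general
    {p : ℕ} [Fact p.Prime]
    {K : Type*} [NontriviallyNormedField K] [IsUltrametricDist K]
    [Algebra ℚ_[p] K] (halg : ∀ x : ℚ_[p], ‖algebraMap ℚ_[p] K x‖ = ‖x‖)
    (q ξ : K) (hq : ‖1 - q‖ < (p : ℝ) ^ (-(1 : ℝ) / ((p : ℝ) - 1)))
    (m : ℕ) (hξ : ξ ^ p ^ m = 1) (h : ℤ) (n : ℕ)
    {d : ℕ} :
    ∀ a : ℕ,
      Tendsto (fun N : ℕ => twistedEulerMeasure p d h n ξ q a N) atTop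
        (nhds (((1 + q) / 2) * (-1 : K) ^ a * ξ ^ a * q ^ (h * (a : ℤ)) *
          ((1 - q ^ a) / (1 - q)) ^ n)) ∧
      ((1 + q) / 2) * (-1 : K) ^ a * ξ ^ a * q ^ (h * (a : ℤ)) *
          ((1 - q ^ a) / (1 - q)) ^ n
        = q ^ ((h - 1) * (a : ℤ)) * ξ ^ a * ((1 - q ^ a) / (1 - q)) ^ n *
            (((1 + q) / 2) * (-1 : K) ^ a * q ^ a) := by
  intro a
  have hprime : p.Prime := Fact.out
  have : CharZero K := charZero_of_injective_algebraMap (algebraMap ℚ_[p] K).injective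
  have hpK : ‖(p : K)‖ < 1 := by
    rw [← map_natCast (algebraMap ℚ_[p] K), halg, Padic.norm_p]
    exact inv_lt_one_of_one_lt₀ (mod_cast hprime.one_lt)
  have hq1 : ‖q - 1‖ < 1 := by
    rw [norm_sub_rev]
    refine hq.trans_le (Real.rpow_le_one_of_one_le_of_nonpos (mod_cast hprime.one_le) ?_)
    exact div_nonpos_of_nonpos_of_nonneg (by norm_num) (by simp [hprime.one_le])
  have hq0 : q ≠ 0 := by
    rintro rfl
    simp at hq1
  refine ⟨tendsto_twistedEulerMeasure two_ne_zero hξ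
    (tendsto_pow_prime_pow_nhds_one hprime hpK hq1) h n a, ?_⟩
  rw [show h * (a : ℤ) = (h - 1) * a + a by ring, zpow_add₀ hq0, zpow_natCast]
  ring

/-- Lemma 3: for every integer `a ≥ 0`,
`lim_{N→∞} μ^{(h)}_{n,ξ,q}(a + dp^N ℤ_p)
  = ((1+q)/2)(−1)^a ξ^a q^{ha} ((1−q^a)/(1−q))^n
  = q^{(h−1)a} ξ^a [a]_q^n · ((1+q)/2)(−1)^a q^a`,
i.e. `dμ^{(h)}_{n,ξ,q}(t) = q^{(h−1)t} ξ^t [t]_q^n dμ_{−q}(t)`. -/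
theorem twistedEulerMeasure_density
    {p : ℕ} [Fact p.Prime] (hp : Odd p)
    {K : Type*} [NontriviallyNormedField K] [CompleteSpace K] [IsUltrametricDist K]
    [Algebra ℚ_[p] K] (halg : ∀ x : ℚ_[p], ‖algebraMap ℚ_[p] K x‖ = ‖x‖)
    (q ξ : K) (hq : ‖1 - q‖ < (p : ℝ) ^ (-(1 : ℝ) / ((p : ℝ) - 1)))
    (m : ℕ) (hξ : ξ ^ p ^ m = 1) (h : ℤ) (n : ℕ)
    {d : ℕ} (hd : Odd d) (hdpos : 0 < d) :
    ∀ a : ℕ,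
      Tendsto (fun N : ℕ => twistedEulerMeasure p d h n ξ q a N) atTop
        (nhds (((1 + q) / 2) * (-1 : K) ^ a * ξ ^ a * q ^ (h * (a : ℤ)) *
          ((1 - q ^ a) / (1 - q)) ^ n)) ∧
      ((1 + q) / 2) * (-1 : K) ^ a * ξ ^ a * q ^ (h * (a : ℤ)) *
          ((1 - q ^ a) / (1 - q)) ^ n
        = q ^ ((h - 1) * (a : ℤ)) * ξ ^ a * ((1 - q ^ a) / (1 - q)) ^ n *
            (((1 + q) / 2) * (-1 : K) ^ a * q ^ a) :=
  twistedEulerMeasure_density_general halg q ξ hq m hξ h n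
end
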